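/- arXiv:1606.07380 — 11 statements merged into one kernel-verified Lean document; each statement's English description precedes it below -/
import Mathlib

section
/- Let X be a finite nonempty set and F : X → ℝ² a map, and let V = conv(F(X)) + ℝ²₊ be the Minkowski sum of the convex hull of the image of F with the nonnegative orthant. Then for every λ ≥ 0 there exists x ∈ X such that F(x) is an extreme point of V and F(x)₁ + λ·F(x)₂ ≤ F(y)₁ + λ·F(y)₂ for all y ∈ X; that is, the weighted-sum problem min_{x∈X} f₁(x) + λ f₂(x) always admits an optimal solution that is an efficient extreme solution. -/
open Pointwise

/-!
Compare points of `ℝ²` lexicographically through the linear map `v ↦ (v₀ + λ v₁, v₁)`. This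
key is injective and, for `λ ≥ 0`, nonnegative on `ℝ²₊`. Its superlevel sets are convex, so a
minimiser `x` over `X` minimises the key on `conv F(X)`, hence on `V`. An injective linear map into
a linearly ordered module takes an interior point of a segment strictly between the images of the
endpoints, so its minimiser `F x` on `V` cannot lie inside a segment of `V`: it is extreme.
-/

instance Prod.Lex.posSMulStrictMono {𝕜 α β : Type*} [Zero 𝕜] [Preorder 𝕜] [Preorder α]
    [Preorder β] [SMul 𝕜 α] [SMul 𝕜 β] [PosSMulStrictMono 𝕜 α] [PosSMulStrictMono 𝕜 β] :
    PosSMulStrictMono 𝕜 (α ×ₗ β) where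
  smul_lt_smul_of_pos_left c hc x y hxy := by
    rw [Prod.Lex.lt_iff] at hxy ⊢
    simp only [ofLex_smul, Prod.smul_fst, Prod.smul_snd]
    obtain h | ⟨h₁, h₂⟩ := hxy
    · exact .inl (smul_lt_smul_of_pos_left h hc)
    · exact .inr ⟨by rw [h₁], smul_lt_smul_of_pos_left h₂ hc⟩

section LinearOrderedModule

variable {𝕜 E M : Type*} [Field 𝕜] [LinearOrder 𝕜] [IsStrictOrderedRing 𝕜]
  [AddCommGroup E] [Module 𝕜 E] [AddCommGroup M] [LinearOrder M] [IsOrderedAddMonoid M]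
  [Module 𝕜 M] [PosSMulStrictMono 𝕜 M]

theorem eq_of_mem_openSegment_of_le_of_le {a b c : M} (hc : c ∈ openSegment 𝕜 a b)
    (hca : c ≤ a) (hcb : c ≤ b) : a = c ∧ b = c := by
  wlog hab : a ≤ b generalizing a b
  · exact (this (openSegment_symm 𝕜 a b ▸ hc) hcb hca (le_of_not_ge hab)).symm
  obtain rfl | hab := hab.eq_or_lt
  · rw [openSegment_same, Set.mem_singleton_iff] at hc
    exact ⟨hc.symm, hc.symm⟩
  · exact absurd hca (openSegment_subset_Ioo hab hc).1.not_ge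

theorem mem_extremePoints_of_isMinOn_of_injective {f : E →ₗ[𝕜] M} (hf : Function.Injective f)
    {A : Set E} {x : E} (hx : x ∈ A) (hmin : IsMinOn f A x) : x ∈ A.extremePoints 𝕜 := by
  refine mem_extremePoints.2 ⟨hx, fun x₁ hx₁ x₂ hx₂ hseg => ?_⟩
  have hfseg : f x ∈ openSegment 𝕜 (f x₁) (f x₂) :=
    image_openSegment 𝕜 f.toAffineMap x₁ x₂ ▸ Set.mem_image_of_mem f hseg
  obtain ⟨h₁, h₂⟩ := eq_of_mem_openSegment_of_le_of_le hfseg (hmin hx₁) (hmin hx₂)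
  exact ⟨hf h₁, hf h₂⟩

end LinearOrderedModule

theorem IsMinOn.convexHull {𝕜 E M : Type*} [Semiring 𝕜] [PartialOrder 𝕜] [AddCommMonoid E]
    [Module 𝕜 E] [AddCommMonoid M] [PartialOrder M] [IsOrderedAddMonoid M] [Module 𝕜 M]
    [PosSMulMono 𝕜 M] {f : E →ₗ[𝕜] M} {s : Set E} {x : E} (hmin : IsMinOn f s x) :
    IsMinOn f (convexHull 𝕜 s) x :=
  convexHull_min hmin ((convex_Ici (f x)).linear_preimage f)

theorem IsMinOn.add_of_nonneg {E M F : Type*} [Add E] [AddZeroClass M] [Preorder M]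
    [AddLeftMono M] [FunLike F E M] [AddHomClass F E M] {f : F} {s P : Set E} {x : E}
    (hmin : IsMinOn f s x) (hP : ∀ p ∈ P, 0 ≤ f p) : IsMinOn f (s + P) x := by
  rintro _ ⟨c, hc, p, hp, rfl⟩
  show f x ≤ f (c + p)
  exact map_add f c p ▸ le_add_of_le_of_nonneg (hmin hc) (hP p hp)

def weightedSumLex (lam : ℝ) : (Fin 2 → ℝ) →ₗ[ℝ] ℝ ×ₗ ℝ :=
  (toLexLinearEquiv ℝ (ℝ × ℝ)).toLinearMap ∘ₗ
    ((LinearMap.proj (R := ℝ) (φ := fun _ : Fin 2 => ℝ) 0 + lam • LinearMap.proj 1).prod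
      (LinearMap.proj 1))

theorem weightedSumLex_apply (lam : ℝ) (v : Fin 2 → ℝ) :
    weightedSumLex lam v = toLex (v 0 + lam * v 1, v 1) := rfl

theorem weightedSumLex_injective (lam : ℝ) : Function.Injective (weightedSumLex lam) := by
  intro v w h
  simp only [weightedSumLex_apply, toLex_inj, Prod.mk.injEq] at h
  ext i; fin_cases i
  · simpa [h.2] using h.1
  · exact h.2

theorem weightedSumLex_nonneg {lam : ℝ} (hlam : 0 ≤ lam) {v : Fin 2 → ℝ} (hv : 0 ≤ v) :
    0 ≤ weightedSumLex lam v :=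
  Prod.Lex.toLex_mono (α := ℝ) (β := ℝ)
    (Prod.mk_le_mk.2 ⟨add_nonneg (hv 0) (mul_nonneg hlam (hv 1)), hv 1⟩)

/-- For every `λ ≥ 0` the weighted-sum problem `min_{x ∈ X} f₁(x) + λ f₂(x)`
admits an optimal solution that is an efficient extreme solution, i.e. whose image under `F`
is an extreme point of `V = conv(F(X)) + ℝ²₊`. -/
theorem weighted_sum_has_extreme_optimal_solution
    {α : Type*} (X : Finset α) (hX : X.Nonempty) (F : α → (Fin 2 → ℝ)) :
    ∀ lam : ℝ, 0 ≤ lam →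
      ∃ x ∈ X,
        F x ∈ (convexHull ℝ (F '' (X : Set α)) +
            {v : Fin 2 → ℝ | 0 ≤ v}).extremePoints ℝ ∧
        ∀ y ∈ X, F x 0 + lam * F x 1 ≤ F y 0 + lam * F y 1 := by
  intro lam hlam
  obtain ⟨x, hxX, hmin⟩ := X.exists_min_image (weightedSumLex lam ∘ F) hX
  refine ⟨x, hxX, ?_, fun y hy => Prod.Lex.monotone_fst _ _ (hmin y hy)⟩
  have hFx : F x ∈ convexHull ℝ (F '' X) + {v : Fin 2 → ℝ | 0 ≤ v} :=
    add_zero (F x) ▸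
      Set.add_mem_add (subset_convexHull ℝ _ ⟨x, hxX, rfl⟩) (Set.mem_ofPred.2 le_rfl)
  have hminF : IsMinOn (weightedSumLex lam) (F '' X) (F x) := by
    rintro _ ⟨y, hy, rfl⟩
    exact hmin y hy
  exact mem_extremePoints_of_isMinOn_of_injective (weightedSumLex_injective lam) hFx
    (hminF.convexHull.add_of_nonneg fun _ hv => weightedSumLex_nonneg hlam hv)
end

section
/- Let X be a finite nonempty set, F : X → ℝ², and V = conv(F(X)) + ℝ²₊. Then for every extreme point v of V there exists λ ≥ 0 such that v₁ + λ·v₂ < w₁ + λ·w₂ for all w ∈ V with w ≠ v. Consequently, every subset S ⊆ X with the property that for each λ ≥ 0 some x ∈ S minimizes F(x)₁ + λ·F(x)₂ over X must satisfy extremePoints(V) ⊆ F(S); in particular |S| is at least the number of extreme points of V. -/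
/-!
An extreme point `v` of `V` is Pareto minimal in `V`: `V` is an upper set, and `v` is the midpoint
of any `p ≤ v` in `V` and of `2v - p ∈ V`. Extremality moreover forces the slope from `v` towards
any point of `F(X)` above `v` to be smaller than the slope towards any point below `v`, which is
positive by Pareto minimality. A `λ > 0` between these finitely many slopes makes `v` the unique
minimizer of `ℓ(w) = w₁ + λ w₂` on `F(X)`; as `insert v {w | ℓ v < ℓ w}` is convex and, `ℓ` being
strictly monotone, an upper set, it then contains all of `V`.
-/
open Pointwise

/-- `conv(F(X)) + ℝ²₊` for a set of objective vectors. -/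
noncomputable def objSpacePolytope (S : Set (Fin 2 → ℝ)) : Set (Fin 2 → ℝ) :=
  convexHull ℝ S + {v : Fin 2 → ℝ | 0 ≤ v}

open Set

lemma convex_insert_setOf_lt {E : Type*} [AddCommGroup E] [Module ℝ E] (f : E →ₗ[ℝ] ℝ) (v : E) :
    Convex ℝ (insert v {w | f v < f w}) := by
  refine convex_iff_forall_pos.2 fun x hx y hy a b ha hb hab => ?_
  by_cases hxy : x = v ∧ y = v
  · left
    rw [hxy.1, hxy.2, ← add_smul, hab, one_smul]
  · right
    have hx' : f v ≤ f x := hx.elim (fun h => h ▸ le_rfl) fun h => h.le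
    have hy' : f v ≤ f y := hy.elim (fun h => h ▸ le_rfl) fun h => h.le
    have hstrict : f v < f x ∨ f v < f y := by
      rcases not_and_or.1 hxy with h | h
      · exact .inl (hx.resolve_left h)
      · exact .inr (hy.resolve_left h)
    change f v < f (a • x + b • y)
    rw [map_add, map_smul, map_smul, smul_eq_mul, smul_eq_mul]
    have hsplit : f v = a * f v + b * f v := by rw [← add_mul, hab, one_mul]
    rcases hstrict with h | h
    · linarith [mul_lt_mul_of_pos_left h ha, mul_le_mul_of_nonneg_left hy' hb.le]
    · linarith [mul_le_mul_of_nonneg_left hx' ha.le, mul_lt_mul_of_pos_left h hb]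

lemma isUpperSet_insert_setOf_lt {E : Type*} [PartialOrder E] {f : E → ℝ} (hf : StrictMono f)
    (v : E) : IsUpperSet (insert v {w | f v < f w}) := by
  intro w w' hww' hw
  rcases eq_or_lt_of_le hww' with rfl | h
  · exact hw
  · exact .inr (hw.elim (fun hwv => hwv ▸ hf h) fun hvw => hvw.trans (hf h))

lemma subset_convexHull_add_nonneg {E : Type*} [AddCommGroup E] [Preorder E] [Module ℝ E]
    (S : Set E) : S ⊆ convexHull ℝ S + {v | 0 ≤ v} :=
  (subset_convexHull ℝ S).trans (subset_add_left _ (le_refl (0 : E)))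

section OrderedModule

variable {E : Type*} [AddCommGroup E] [PartialOrder E] [IsOrderedAddMonoid E] [Module ℝ E]

lemma eq_of_le_of_mem_extremePoints {V : Set E} (hV : IsUpperSet V) {v p : E}
    (hv : v ∈ V.extremePoints ℝ) (hp : p ∈ V) (hpv : p ≤ v) : p = v := by
  have hq : v + (v - p) ∈ V := hV (le_add_of_nonneg_right (sub_nonneg.2 hpv)) hv.1
  exact hv.2 hp hq ⟨1 / 2, 1 / 2, by norm_num, by norm_num, by norm_num, by module⟩

lemma isUpperSet_convexHull_add_nonneg (S : Set E) :
    IsUpperSet (convexHull ℝ S + {v | 0 ≤ v}) :=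
  (isUpperSet_Ici 0).add_left

lemma convexHull_add_nonneg_subset {S T : Set E} (hTc : Convex ℝ T) (hTu : IsUpperSet T)
    (hST : S ⊆ T) : convexHull ℝ S + {v | 0 ≤ v} ⊆ T := by
  rintro _ ⟨a, ha, c, hc, rfl⟩
  exact hTu (le_add_of_nonneg_right hc) (convexHull_min hST hTc ha)

lemma extremePoints_convexHull_add_nonneg_subset (S : Set E) :
    (convexHull ℝ S + {v | 0 ≤ v}).extremePoints ℝ ⊆ S := by
  intro v hv
  obtain ⟨a, ha, c, hc, hacv⟩ := hv.1
  have hhull : convexHull ℝ S ⊆ convexHull ℝ S + {v | 0 ≤ v} :=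
    subset_add_left _ (le_refl (0 : E))
  have hav : a = v := eq_of_le_of_mem_extremePoints (isUpperSet_convexHull_add_nonneg S) hv
    (hhull ha) (hacv ▸ le_add_of_nonneg_right hc)
  subst hav
  exact extremePoints_convexHull_subset
    (inter_extremePoints_subset_extremePoints_of_subset hhull ⟨ha, hv⟩)

end OrderedModule

def weightedSum (lam : ℝ) : (Fin 2 → ℝ) →ₗ[ℝ] ℝ :=
  LinearMap.proj 0 + lam • LinearMap.proj 1

@[simp]
lemma weightedSum_apply (lam : ℝ) (w : Fin 2 → ℝ) : weightedSum lam w = w 0 + lam * w 1 :=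
  rfl

lemma strictMono_weightedSum {lam : ℝ} (hlam : 0 < lam) : StrictMono (weightedSum lam) := by
  intro w w' h
  obtain ⟨hle, hlt⟩ := Pi.lt_def.1 h
  have h0 := hle 0
  have h1 := hle 1
  simp only [weightedSum_apply]
  rcases Fin.exists_fin_two.1 hlt with h | h <;> nlinarith

section Plane

variable {V : Set (Fin 2 → ℝ)} {v : Fin 2 → ℝ}

lemma apply_zero_lt_apply_zero_of_apply_one_le (hV : IsUpperSet V) (hv : v ∈ V.extremePoints ℝ)
    {q : Fin 2 → ℝ} (hq : q ∈ V) (hqv : q ≠ v) (h1 : q 1 ≤ v 1) : v 0 < q 0 := by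
  by_contra! h0
  exact hqv (eq_of_le_of_mem_extremePoints hV hv hq (Pi.le_def.2 (Fin.forall_fin_two.2 ⟨h0, h1⟩)))

lemma slope_lt_slope_of_mem_extremePoints (hVc : Convex ℝ V) (hVu : IsUpperSet V)
    (hv : v ∈ V.extremePoints ℝ) {p q : Fin 2 → ℝ} (hp : p ∈ V) (hq : q ∈ V)
    (hp1 : v 1 < p 1) (hq1 : q 1 < v 1) :
    (v 0 - p 0) / (p 1 - v 1) < (q 0 - v 0) / (v 1 - q 1) := by
  by_contra hle
  rw [not_lt, div_le_div_iff₀ (by linarith) (by linarith)] at hle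
  -- otherwise the point of `[p, q]` at height `v 1` is weakly left of `v`, hence equal to `v`
  set t := (v 1 - q 1) / (p 1 - q 1)
  have ht0 : 0 < t := div_pos (by linarith) (by linarith)
  have ht1 : t < 1 := (div_lt_one (by linarith)).2 (by linarith)
  have ht : t * (p 1 - q 1) = v 1 - q 1 := div_mul_cancel₀ _ (by linarith)
  have hm0 : t * p 0 + (1 - t) * q 0 ≤ v 0 := by
    have h : (t * p 0 + (1 - t) * q 0 - v 0) * (p 1 - q 1) ≤ 0 := by
      linear_combination (p 0 - q 0) * ht + hle
    linarith [nonpos_of_mul_nonpos_left h (by linarith)]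
  have hm1 : t * p 1 + (1 - t) * q 1 ≤ v 1 := by linear_combination ht
  have hm : t • p + (1 - t) • q = v :=
    eq_of_le_of_mem_extremePoints hVu hv (hVc hp hq ht0.le (by linarith) (by ring))
      (Pi.le_def.2 (Fin.forall_fin_two.2 ⟨hm0, hm1⟩))
  have hpv : p = v := hv.2 hp hq ⟨t, 1 - t, ht0, by linarith, by ring, hm⟩
  exact hp1.ne' (congrFun hpv 1)

end Plane

lemma exists_pos_weightedSum_lt_on_finite {S : Set (Fin 2 → ℝ)} (hS : S.Finite)
    {v : Fin 2 → ℝ} (hv : v ∈ (objSpacePolytope S).extremePoints ℝ) :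
    ∃ lam, 0 < lam ∧ ∀ p ∈ S, p ≠ v → weightedSum lam v < weightedSum lam p := by
  have hVc : Convex ℝ (objSpacePolytope S) := (convex_convexHull ℝ S).add (convex_Ici 0)
  have hVu : IsUpperSet (objSpacePolytope S) := isUpperSet_convexHull_add_nonneg S
  have hSV : S ⊆ objSpacePolytope S := subset_convexHull_add_nonneg S
  obtain ⟨lam, hlo, hhi⟩ := Set.Finite.exists_between'
    (s := insert 0 ((fun p => (v 0 - p 0) / (p 1 - v 1)) '' {p ∈ S | v 1 < p 1}))
    (t := (fun q => (q 0 - v 0) / (v 1 - q 1)) '' {q ∈ S | q 1 < v 1})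
    (((hS.subset (sep_subset _ _)).image _).insert 0) ((hS.subset (sep_subset _ _)).image _) (by
      rintro a ha _ ⟨q, ⟨hqS, hq1⟩, rfl⟩
      rcases ha with rfl | ⟨p, ⟨hpS, hp1⟩, rfl⟩
      · have hq0 := apply_zero_lt_apply_zero_of_apply_one_le hVu hv (hSV hqS)
          (fun h => hq1.ne (congrFun h 1)) hq1.le
        exact div_pos (by linarith) (by linarith)
      · exact slope_lt_slope_of_mem_extremePoints hVc hVu hv (hSV hpS) (hSV hqS) hp1 hq1)
  have hlam : 0 < lam := hlo 0 (mem_insert _ _)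
  refine ⟨lam, hlam, fun p hpS hpv => ?_⟩
  simp only [weightedSum_apply]
  rcases lt_trichotomy (p 1) (v 1) with hp1 | hp1 | hp1
  · have h := hhi _ ⟨p, ⟨hpS, hp1⟩, rfl⟩
    rw [lt_div_iff₀ (by linarith)] at h
    linarith
  · have h := apply_zero_lt_apply_zero_of_apply_one_le hVu hv (hSV hpS) hpv hp1.le
    rw [hp1]
    linarith
  · have h := hlo _ (mem_insert_of_mem _ ⟨p, ⟨hpS, hp1⟩, rfl⟩)
    rw [div_lt_iff₀ (by linarith)] at h
    linarith

lemma exists_pos_weightedSum_lt_on_objSpacePolytope {S : Set (Fin 2 → ℝ)} (hS : S.Finite)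
    {v : Fin 2 → ℝ} (hv : v ∈ (objSpacePolytope S).extremePoints ℝ) :
    ∃ lam, 0 < lam ∧
      ∀ w ∈ objSpacePolytope S, w ≠ v → weightedSum lam v < weightedSum lam w := by
  obtain ⟨lam, hlam, hlt⟩ := exists_pos_weightedSum_lt_on_finite hS hv
  have hsub : objSpacePolytope S ⊆ insert v {w | weightedSum lam v < weightedSum lam w} :=
    convexHull_add_nonneg_subset (convex_insert_setOf_lt _ v)
      (isUpperSet_insert_setOf_lt (strictMono_weightedSum hlam) v)
      fun p hp => or_iff_not_imp_left.2 (hlt p hp)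
  exact ⟨lam, hlam, fun w hw hwv => (hsub hw).resolve_left hwv⟩

theorem extreme_points_strictly_exposed_and_lower_bound_general
    {α : Type*} (X : Finset α) (F : α → (Fin 2 → ℝ)) :
    (∀ v ∈ (objSpacePolytope (F '' (X : Set α))).extremePoints ℝ,
      ∃ lam : ℝ, 0 ≤ lam ∧
        ∀ w ∈ objSpacePolytope (F '' (X : Set α)), w ≠ v →
          v 0 + lam * v 1 < w 0 + lam * w 1) ∧
    (∀ S : Finset α, S ⊆ X →
      (∀ lam : ℝ, 0 ≤ lam →
        ∃ x ∈ S, ∀ y ∈ X, F x 0 + lam * F x 1 ≤ F y 0 + lam * F y 1) →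
      ((objSpacePolytope (F '' (X : Set α))).extremePoints ℝ ⊆ F '' (S : Set α) ∧
        ((objSpacePolytope (F '' (X : Set α))).extremePoints ℝ).ncard ≤ S.card)) := by
  have hexposed := fun v (hv : v ∈ (objSpacePolytope (F '' (X : Set α))).extremePoints ℝ) =>
    exists_pos_weightedSum_lt_on_objSpacePolytope (X.finite_toSet.image F) hv
  refine ⟨fun v hv => ?_, fun S hSX hS => ?_⟩
  · obtain ⟨lam, hlam, hlt⟩ := hexposed v hv
    exact ⟨lam, hlam.le, hlt⟩
  have hsub : (objSpacePolytope (F '' (X : Set α))).extremePoints ℝ ⊆ F '' (S : Set α) := by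
    intro v hv
    obtain ⟨lam, hlam, hlt⟩ := hexposed v hv
    obtain ⟨x, hxS, hxmin⟩ := hS lam hlam.le
    obtain ⟨x₀, hx₀, rfl⟩ := extremePoints_convexHull_add_nonneg_subset _ hv
    have hFx : F x ∈ objSpacePolytope (F '' (X : Set α)) :=
      subset_convexHull_add_nonneg _ ⟨x, hSX hxS, rfl⟩
    exact ⟨x, hxS, by_contra fun hne => (hxmin x₀ hx₀).not_gt (hlt _ hFx hne)⟩
  refine ⟨hsub, ?_⟩
  calc _ ≤ (F '' (S : Set α)).ncard := ncard_le_ncard hsub (S.finite_toSet.image F)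
    _ ≤ (S : Set α).ncard := ncard_image_le S.finite_toSet
    _ = S.card := ncard_coe_finset S

/-- every extreme point `v` of `V = conv(F(X)) + ℝ²₊` is the unique minimizer of
`w ↦ w₁ + λ w₂` over `V` for some `λ ≥ 0`; consequently every set `S ⊆ X` containing, for each
`λ ≥ 0`, a minimizer of `F(·)₁ + λ F(·)₂` over `X` satisfies `extremePoints V ⊆ F(S)`, and
in particular `|S|` is at least the number of extreme points of `V`. -/
theorem extreme_points_strictly_exposed_and_lower_bound
    {α : Type*} (X : Finset α) (hX : X.Nonempty) (F : α → (Fin 2 → ℝ)) :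
    (∀ v ∈ (objSpacePolytope (F '' (X : Set α))).extremePoints ℝ,
      ∃ lam : ℝ, 0 ≤ lam ∧
        ∀ w ∈ objSpacePolytope (F '' (X : Set α)), w ≠ v →
          v 0 + lam * v 1 < w 0 + lam * w 1) ∧
    (∀ S : Finset α, S ⊆ X →
      (∀ lam : ℝ, 0 ≤ lam →
        ∃ x ∈ S, ∀ y ∈ X, F x 0 + lam * F x 1 ≤ F y 0 + lam * F y 1) →
      ((objSpacePolytope (F '' (X : Set α))).extremePoints ℝ ⊆ F '' (S : Set α) ∧
        ((objSpacePolytope (F '' (X : Set α))).extremePoints ℝ).ncard ≤ S.card)) :=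
  extreme_points_strictly_exposed_and_lower_bound_general X F
end

section
/- Let n ≥ 1, let X ⊆ {0,1}ⁿ be finite and nonempty, and let ĉ ∈ ℝⁿ with ĉ ≥ 0 componentwise. Define F : X → ℝ² by F(x) = (ĉᵀx, Σᵢ xᵢ) (nominal cost and ℓ₁-norm), and let V = conv(F(X)) + ℝ²₊. Then the number of extreme points of V is at most n. -/
/-! Extreme points of an upper set are minimal in it, and those of `conv S + ℝ²₊` lie in `S`.
Minimal points of a subset of the plane have pairwise distinct second coordinates, and the second
coordinate of `F x` is the number of ones of `x`, an integer in `{0, …, n}`. If `F 0 = 0` is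
extreme, it is the least point of `V` and hence the only extreme point; otherwise the second
coordinates of the extreme points lie in `{1, …, n}`. -/

open Pointwise Set

section ExtremePoints

variable {𝕜 E : Type*} [Field 𝕜] [LinearOrder 𝕜] [IsStrictOrderedRing 𝕜]
  [AddCommGroup E] [PartialOrder E] [IsOrderedAddMonoid E] [Module 𝕜 E]

/-- If `u ≤ v` lie in an upper set, so does `v + (v - u)`, and `v` is the midpoint of the two. -/
theorem IsUpperSet.minimal_of_mem_extremePoints {V : Set E} {v : E} (hV : IsUpperSet V)
    (hv : v ∈ V.extremePoints 𝕜) : Minimal (· ∈ V) v := by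
  refine ⟨hv.1, fun u hu huv => ?_⟩
  have hw : v + (v - u) ∈ V := hV (le_add_of_nonneg_right (sub_nonneg.2 huv)) hv.1
  have hseg : v ∈ openSegment 𝕜 u (v + (v - u)) :=
    ⟨2⁻¹, 2⁻¹, by norm_num, by norm_num, by norm_num, by module⟩
  exact (hv.2 hu hw hseg).ge

theorem extremePoints_add_Ici_zero_subset (A : Set E) :
    (A + Ici 0).extremePoints 𝕜 ⊆ A.extremePoints 𝕜 := by
  intro v hv
  have hAV : A ⊆ A + Ici 0 := subset_add_left A self_mem_Ici
  have hmin := (isUpperSet_Ici (0 : E)).add_left.minimal_of_mem_extremePoints hv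
  obtain ⟨a, ha, k, hk, hakv⟩ := hv.1
  have hav : a = v := hmin.eq_of_le (hAV ha) (hakv ▸ le_add_of_nonneg_right hk)
  exact inter_extremePoints_subset_extremePoints_of_subset hAV ⟨hav ▸ ha, hv⟩

end ExtremePoints

theorem injOn_apply_one_setOf_minimal {α : Type*} [LinearOrder α] (V : Set (Fin 2 → α)) :
    InjOn (fun v => v 1) {v | Minimal (· ∈ V) v} := by
  have key : ∀ ⦃u v : Fin 2 → α⦄, Minimal (· ∈ V) u → Minimal (· ∈ V) v →
      u 1 = v 1 → u 0 ≤ v 0 → u = v :=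
    fun u v hu hv h1 h0 => hv.eq_of_le hu.1 (Fin.forall_fin_two.2 ⟨h0, h1.le⟩)
  intro u hu v hv h
  rcases le_total (u 0) (v 0) with h0 | h0
  exacts [key hu hv h h0, (key hv hu h.symm h0).symm]

section Binary

variable {n : ℕ} {x : Fin n → ℝ}

theorem nonneg_of_binary (hx : ∀ i, x i = 0 ∨ x i = 1) : 0 ≤ x :=
  fun i => (hx i).elim (fun h => h.ge) (fun h => h ▸ zero_le_one)

theorem sum_eq_card_of_binary [DecidablePred fun i => x i = 1] (hx : ∀ i, x i = 0 ∨ x i = 1) :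
    ∑ i, x i = (Finset.univ.filter fun i => x i = 1).card := by
  rw [← Finset.sum_boole]
  refine Finset.sum_congr rfl fun i _ => ?_
  rcases hx i with h | h <;> simp [h]

theorem eq_zero_of_binary_of_sum_eq_zero (hx : ∀ i, x i = 0 ∨ x i = 1) (hsum : ∑ i, x i = 0) :
    x = 0 :=
  funext fun i => (Finset.sum_eq_zero_iff_of_nonneg fun j _ => nonneg_of_binary hx j).1 hsum i
    (Finset.mem_univ i)

variable {c : Fin n → ℝ}

theorem cost_size_nonneg (hc : 0 ≤ c) (hx : ∀ i, x i = 0 ∨ x i = 1) :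
    0 ≤ ![∑ i, c i * x i, ∑ i, x i] := by
  have hx0 := nonneg_of_binary hx
  refine Fin.forall_fin_two.2 ⟨?_, ?_⟩ <;>
    simp only [Matrix.cons_val_zero, Matrix.cons_val_one, Pi.zero_apply]
  · exact Finset.sum_nonneg fun i _ => mul_nonneg (hc i) (hx0 i)
  · exact Finset.sum_nonneg fun i _ => hx0 i

theorem sum_mem_image_cast_Icc_of_cost_size_ne_zero (hx : ∀ i, x i = 0 ∨ x i = 1)
    (hne : ![∑ i, c i * x i, ∑ i, x i] ≠ 0) :
    ∑ i, x i ∈ (Finset.Icc 1 n).image (Nat.cast : ℕ → ℝ) := by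
  classical
  rw [sum_eq_card_of_binary hx]
  refine Finset.mem_image_of_mem _
    (Finset.mem_Icc.2 ⟨Nat.one_le_iff_ne_zero.2 fun h0 => hne ?_, ?_⟩)
  · have hx0 : x = 0 :=
      eq_zero_of_binary_of_sum_eq_zero hx (by rw [sum_eq_card_of_binary hx, h0, Nat.cast_zero])
    simp [hx0]
  · exact (Finset.card_filter_le _ _).trans (Finset.card_fin n).le

end Binary

theorem constant_growth_extreme_points_le_n_general
    {n : ℕ} (hn : 1 ≤ n) (X : Finset (Fin n → ℝ))
    (hX01 : ∀ x ∈ X, ∀ i, x i = 0 ∨ x i = 1)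
    (chat : Fin n → ℝ) (hchat : ∀ i, 0 ≤ chat i) :
    ((convexHull ℝ ((fun x => ![∑ i, chat i * x i, ∑ i, x i]) '' (X : Set (Fin n → ℝ))) +
        {v : Fin 2 → ℝ | 0 ≤ v}).extremePoints ℝ).ncard ≤ n := by
  set S := (fun x => ![∑ i, chat i * x i, ∑ i, x i]) '' (X : Set (Fin n → ℝ))
  change ((convexHull ℝ S + Ici 0).extremePoints ℝ).ncard ≤ n
  set E := (convexHull ℝ S + Ici 0).extremePoints ℝ
  have hES : E ⊆ S := (extremePoints_add_Ici_zero_subset _).trans extremePoints_convexHull_subset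
  have hmin : E ⊆ {v | Minimal (· ∈ convexHull ℝ S + Ici 0) v} := fun e he =>
    (isUpperSet_Ici 0).add_left.minimal_of_mem_extremePoints he
  by_cases h0 : (0 : Fin 2 → ℝ) ∈ E
  · have hE0 : E ⊆ {0} := fun e he => by
      obtain ⟨x, hx, rfl⟩ := hES he
      exact ((hmin he).eq_of_le h0.1 (cost_size_nonneg hchat (hX01 x hx))).symm
    calc E.ncard ≤ ({0} : Set (Fin 2 → ℝ)).ncard := ncard_le_ncard hE0
      _ = 1 := ncard_singleton 0
      _ ≤ n := hn
  · have hmaps :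
        ∀ e ∈ E, e 1 ∈ ((Finset.Icc 1 n).image (Nat.cast : ℕ → ℝ) : Set ℝ) := by
      intro e he
      obtain ⟨x, hx, rfl⟩ := hES he
      exact sum_mem_image_cast_Icc_of_cost_size_ne_zero (hX01 x hx) fun h => h0 (h ▸ he)
    calc E.ncard ≤ ((Finset.Icc 1 n).image (Nat.cast : ℕ → ℝ) : Set ℝ).ncard :=
          ncard_le_ncard_of_injOn _ hmaps ((injOn_apply_one_setOf_minimal _).mono hmin)
      _ = n := by
        rw [ncard_coe_finset, Finset.card_image_of_injective _ Nat.cast_injective, Nat.card_Icc,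
          Nat.add_sub_cancel]

/-- for `X ⊆ {0,1}ⁿ`, `ĉ ≥ 0`, and `F(x) = (ĉᵀx, Σᵢ xᵢ)`, the set
`V = conv(F(X)) + ℝ²₊` has at most `n` extreme points. -/
theorem constant_growth_extreme_points_le_n
    {n : ℕ} (hn : 1 ≤ n) (X : Finset (Fin n → ℝ)) (hXne : X.Nonempty)
    (hX01 : ∀ x ∈ X, ∀ i, x i = 0 ∨ x i = 1)
    (chat : Fin n → ℝ) (hchat : ∀ i, 0 ≤ chat i) :
    ((convexHull ℝ ((fun x => ![∑ i, chat i * x i, ∑ i, x i]) '' (X : Set (Fin n → ℝ))) +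
        {v : Fin 2 → ℝ | 0 ≤ v}).extremePoints ℝ).ncard ≤ n :=
  constant_growth_extreme_points_le_n_general hn X hX01 chat hchat
end

section
/- Let n ≥ 1, let X ⊆ {0,1}ⁿ be finite and nonempty, and let ĉ ∈ ℝⁿ with ĉ ≥ 0 componentwise. Consider the variable-sized min-max robust problem with constant growth, whose objective for uncertainty size λ ≥ 0 is x ↦ ĉᵀx + λ·Σᵢ xᵢ. Then there exists a set S ⊆ X with |S| ≤ n such that for every λ ≥ 0 some x ∈ S minimizes ĉᵀx + λ·Σᵢ xᵢ over X. -/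
/-!
Group the feasible solutions by their size `∑ᵢ xᵢ`. Within one size class the robust objective
differs from the nominal cost by the same constant, so a nominally cheapest solution of each class
is optimal among that class for every `λ`, and these representatives form the solution set. A
nonzero `0/1` vector has size in `{1, …, n}`, giving at most `n` classes; if the zero vector is
feasible it is optimal for every `λ ≥ 0` on its own, because all costs are nonnegative.
-/

open Finset

section Representatives

variable {α β : Type*}

theorem Finset.exists_min_of_forall_exists_le [LinearOrder β] {s t : Finset α} (hs : s.Nonempty)
    (h : α → β) (hdom : ∀ y ∈ s, ∃ r ∈ t, h r ≤ h y) : ∃ x ∈ t, ∀ y ∈ s, h x ≤ h y := by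
  obtain ⟨y, hy⟩ := hs
  obtain ⟨r, hr, -⟩ := hdom y hy
  obtain ⟨x, hx, hxmin⟩ := t.exists_min_image h ⟨r, hr⟩
  refine ⟨x, hx, fun y hy => ?_⟩
  obtain ⟨r, hr, hry⟩ := hdom y hy
  exact (hxmin r hr).trans hry

theorem Finset.exists_fiberwise_argmin {γ : Type*} [DecidableEq α] [LinearOrder β]
    [DecidableEq γ] (s : Finset α) (f : α → β) (g : α → γ) :
    ∃ t ⊆ s, #t ≤ #(s.image g) ∧ ∀ y ∈ s, ∃ r ∈ t, g r = g y ∧ f r ≤ f y := by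
  have hfiber : ∀ k ∈ s.image g,
      ∃ x ∈ s.filter (g · = k), ∀ y ∈ s.filter (g · = k), f x ≤ f y := by
    intro k hk
    obtain ⟨x, hx, hxk⟩ := mem_image.mp hk
    exact (s.filter (g · = k)).exists_min_image f ⟨x, mem_filter.mpr ⟨hx, hxk⟩⟩
  choose rep hrep hrepmin using hfiber
  refine ⟨(s.image g).attach.image fun k => rep k.1 k.2, ?_, ?_, ?_⟩
  · intro x hx
    obtain ⟨k, -, rfl⟩ := mem_image.mp hx
    exact (mem_filter.mp (hrep k.1 k.2)).1
  · exact card_image_le.trans card_attach.le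
  · intro y hy
    have hk : g y ∈ s.image g := mem_image_of_mem g hy
    exact ⟨rep (g y) hk, mem_image.mpr ⟨⟨g y, hk⟩, mem_attach _ _, rfl⟩,
      (mem_filter.mp (hrep (g y) hk)).2, hrepmin (g y) hk y (mem_filter.mpr ⟨hy, rfl⟩)⟩

theorem Finset.exists_subset_card_le_card_image_forall_exists_min_add_mul [DecidableEq α]
    {s : Finset α} (hs : s.Nonempty) (f g : α → ℝ) :
    ∃ t ⊆ s, #t ≤ #(s.image g) ∧
      ∀ lam : ℝ, ∃ x ∈ t, ∀ y ∈ s, f x + lam * g x ≤ f y + lam * g y := by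
  obtain ⟨t, hts, hcard, hdom⟩ := s.exists_fiberwise_argmin f g
  refine ⟨t, hts, hcard, fun lam => exists_min_of_forall_exists_le hs _ fun y hy => ?_⟩
  obtain ⟨r, hr, hgr, hfr⟩ := hdom y hy
  exact ⟨r, hr, by rw [hgr]; linarith⟩

end Representatives

section ZeroOneVectors

variable {ι : Type*} [Fintype ι]

theorem sum_eq_card_filter_eq_one {x : ι → ℝ} (hx : ∀ i, x i = 0 ∨ x i = 1) :
    ∑ i, x i = #{i | x i = 1} := by
  rw [← sum_boole]
  exact sum_congr rfl fun i _ => by rcases hx i with h | h <;> simp [h]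

theorem card_image_sum_le_of_zero_notMem [DecidableEq ι] {X : Finset (ι → ℝ)}
    (hX01 : ∀ x ∈ X, ∀ i, x i = 0 ∨ x i = 1) (h0 : 0 ∉ X) :
    #(X.image fun x => ∑ i, x i) ≤ Fintype.card ι := by
  suffices X.image (fun x => ∑ i, x i) ⊆ (Icc 1 (Fintype.card ι)).image ((↑) : ℕ → ℝ) from
    (card_le_card this).trans (card_image_le.trans (by simp))
  intro k hk
  obtain ⟨x, hx, rfl⟩ := mem_image.mp hk
  have hsupp : ({i | x i = 1} : Finset ι).Nonempty := by
    by_contra hempty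
    have hx0 : x = 0 := funext fun i =>
      (hX01 x hx i).resolve_right fun h => hempty ⟨i, by simp [h]⟩
    exact h0 (hx0 ▸ hx)
  refine mem_image.mpr ⟨#{i | x i = 1}, mem_Icc.mpr ⟨hsupp.card_pos, card_le_univ _⟩,
    (sum_eq_card_filter_eq_one (hX01 x hx)).symm⟩

end ZeroOneVectors

/-- the variable-sized min-max robust problem with constant growth
(objective `ĉᵀx + λ·Σᵢ xᵢ`) admits a solution set `S ⊆ X` with `|S| ≤ n`
containing an optimal solution for every uncertainty size `λ ≥ 0`. -/
theorem variable_sized_constant_growth_solution_set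
    {n : ℕ} (hn : 1 ≤ n) (X : Finset (Fin n → ℝ)) (hXne : X.Nonempty)
    (hX01 : ∀ x ∈ X, ∀ i, x i = 0 ∨ x i = 1)
    (chat : Fin n → ℝ) (hchat : ∀ i, 0 ≤ chat i) :
    ∃ S : Finset (Fin n → ℝ), S ⊆ X ∧ S.card ≤ n ∧
      ∀ lam : ℝ, 0 ≤ lam → ∃ x ∈ S, ∀ y ∈ X,
        (∑ i, chat i * x i) + lam * ∑ i, x i ≤ (∑ i, chat i * y i) + lam * ∑ i, y i := by
  classical
  by_cases h0 : (0 : Fin n → ℝ) ∈ X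
  · refine ⟨{0}, singleton_subset_iff.mpr h0, by simpa using hn,
      fun lam hlam => ⟨0, mem_singleton_self 0, fun y hy => ?_⟩⟩
    have hy : 0 ≤ y := fun i => by rcases hX01 y hy i with h | h <;> simp [h]
    simp only [Pi.zero_apply, mul_zero, sum_const_zero, add_zero]
    exact add_nonneg (sum_nonneg fun i _ => mul_nonneg (hchat i) (hy i))
      (mul_nonneg hlam (sum_nonneg fun i _ => hy i))
  · obtain ⟨S, hSX, hcard, hmin⟩ :=
      exists_subset_card_le_card_image_forall_exists_min_add_mul hXne
        (fun x => ∑ i, chat i * x i) (fun x => ∑ i, x i)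
    exact ⟨S, hSX, hcard.trans ((card_image_sum_le_of_zero_notMem hX01 h0).trans_eq
      (Fintype.card_fin n)), fun lam _ => hmin lam⟩
end

section
/- Let G be a simple graph on a finite vertex set of cardinality N, let s and t be vertices with at least one s–t path, and let c be a nonnegative real cost on the edges of G. For an s–t path P write c(P) for the sum of the costs of its edges and |P| for its number of edges. Then there exists a set S of s–t paths with |S| ≤ N such that for every λ ≥ 0 some P ∈ S minimizes c(P) + λ·|P| over all s–t paths in G. -/
/-!
Sorting the s–t paths by their number of edges, only a cheapest path of each length can
minimize `c(P) + λ·|P|`, whatever `λ` is, since the penalty `λ·|P|` depends on the length alone.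
A path has fewer than `N` edges, so at most `N` lengths occur.
-/

open Finset SimpleGraph

namespace Finset

variable {α β : Type*} [AddCommMonoid β] [LinearOrder β] [IsOrderedAddMonoid β]

theorem exists_subset_card_le_card_image_forall_exists_isMinOn_add
    (F : Finset α) (hF : F.Nonempty) (cost : α → β) (len : α → ℕ) :
    ∃ S ⊆ F, #S ≤ #(F.image len) ∧
      ∀ g : ℕ → β, ∃ p ∈ S, IsMinOn (fun q => cost q + g (len q)) F p := by
  classical
  have : Nonempty α := ⟨hF.choose⟩
  have hcheapest : ∀ k ∈ F.image len,
      ∃ p ∈ F.filter (len · = k), ∀ q ∈ F.filter (len · = k), cost p ≤ cost q := by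
    intro k hk
    obtain ⟨p, hp, rfl⟩ := mem_image.mp hk
    exact exists_min_image _ cost ⟨p, mem_filter.mpr ⟨hp, rfl⟩⟩
  choose! cheapest hcheapest_mem hcheapest_le using hcheapest
  refine ⟨(F.image len).image cheapest, ?_, card_image_le, fun g => ?_⟩
  · intro p hp
    obtain ⟨k, hk, rfl⟩ := mem_image.mp hp
    exact (mem_filter.mp (hcheapest_mem k hk)).1
  obtain ⟨q₀, hq₀, hq₀_min⟩ := exists_min_image F (fun q => cost q + g (len q)) hF
  have hk : len q₀ ∈ F.image len := mem_image_of_mem len hq₀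
  have hlen : len (cheapest (len q₀)) = len q₀ := (mem_filter.mp (hcheapest_mem _ hk)).2
  refine ⟨cheapest (len q₀), mem_image_of_mem _ hk, fun q hq => ?_⟩
  calc cost (cheapest (len q₀)) + g (len (cheapest (len q₀)))
      ≤ cost q₀ + g (len q₀) := by
        rw [hlen]
        exact add_le_add_left (hcheapest_le _ hk q₀ (mem_filter.mpr ⟨hq₀, rfl⟩)) _
    _ ≤ cost q + g (len q) := hq₀_min q hq

end Finset

namespace SimpleGraph

variable {V : Type*} [Fintype V] (G : SimpleGraph V)

theorem finite_setOf_isPath (s t : V) : {p : G.Walk s t | p.IsPath}.Finite := by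
  classical
  exact (Set.toFinite {p : G.Walk s t | p.IsPath ∧ p.length < Fintype.card V}).subset
    fun p hp => ⟨hp, Walk.IsPath.length_lt hp⟩

end SimpleGraph

theorem variable_sized_robust_shortest_path_constant_growth_general
    {V : Type*} [Fintype V] (N : ℕ) (hN : Fintype.card V = N)
    (G : SimpleGraph V) (s t : V)
    (hpath : ∃ p : G.Walk s t, p.IsPath)
    (c : Sym2 V → ℝ) :
    ∃ S : Set (G.Walk s t), S.Finite ∧ S.ncard ≤ N ∧ (∀ p ∈ S, p.IsPath) ∧
      ∀ lam : ℝ, 0 ≤ lam → ∃ p ∈ S, ∀ q : G.Walk s t, q.IsPath →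
        (p.edges.map c).sum + lam * (p.length : ℝ) ≤
          (q.edges.map c).sum + lam * (q.length : ℝ) := by
  set F := (G.finite_setOf_isPath s t).toFinset
  have hF : F.Nonempty := by
    obtain ⟨p, hp⟩ := hpath
    exact ⟨p, by simpa [F] using hp⟩
  obtain ⟨S, hSF, hcard, hmin⟩ := F.exists_subset_card_le_card_image_forall_exists_isMinOn_add hF
    (fun p => (p.edges.map c).sum) Walk.length
  have hlengths : F.image Walk.length ⊆ range N := by
    intro k hk
    obtain ⟨p, hp, rfl⟩ := mem_image.mp hk
    simpa [F, ← hN] using Walk.IsPath.length_lt (by simpa [F] using hp)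
  refine ⟨S, S.finite_toSet, ?_, fun p hp => by simpa [F] using hSF hp, fun lam _ => ?_⟩
  · rw [Set.ncard_coe_finset]
    exact hcard.trans ((card_le_card hlengths).trans_eq (card_range N))
  obtain ⟨p, hp, hp_min⟩ := hmin (fun k => lam * k)
  exact ⟨p, hp, fun q hq => hp_min (by simpa [F] using hq)⟩

/-- in a finite simple graph on `N` vertices with nonnegative edge costs,
the variable-sized robust shortest path problem with constant growth (objective
`c(P) + λ·|P|`) admits a solution set of at most `N` s–t paths containing, for every
`λ ≥ 0`, a path minimizing `c(P) + λ·|P|` over all s–t paths. -/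
theorem variable_sized_robust_shortest_path_constant_growth
    {V : Type*} [Fintype V] (N : ℕ) (hN : Fintype.card V = N)
    (G : SimpleGraph V) (s t : V)
    (hpath : ∃ p : G.Walk s t, p.IsPath)
    (c : Sym2 V → ℝ) (hc : ∀ e ∈ G.edgeSet, 0 ≤ c e) :
    ∃ S : Set (G.Walk s t), S.Finite ∧ S.ncard ≤ N ∧ (∀ p ∈ S, p.IsPath) ∧
      ∀ lam : ℝ, 0 ≤ lam → ∃ p ∈ S, ∀ q : G.Walk s t, q.IsPath →
        (p.edges.map c).sum + lam * (p.length : ℝ) ≤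
          (q.edges.map c).sum + lam * (q.length : ℝ) :=
  variable_sized_robust_shortest_path_constant_growth_general N hN G s t hpath c
end

section
/- Let ℓ ≥ 1 and w ≥ 1 model a layered graph with ℓ layers each of width w: an s–t path is a function π : Fin ℓ → Fin w choosing one node per layer. A cost system consists of start costs a : Fin w → ℝ, transition costs t : Fin (ℓ−1) → Fin w → Fin w → ℝ, and end costs b : Fin w → ℝ, and assigns to π the cost a(π(0)) + Σ_{i=0}^{ℓ−2} t(i, π(i), π(i+1)) + b(π(ℓ−1)). Let f and g be the cost functions of two such cost systems and let V = conv({(f(π), g(π)) : π : Fin ℓ → Fin w}) + ℝ²₊. Then the number of extreme points of V is at most (2w)^{⌈log₂(ℓ+1)⌉}. -/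
/-!
An extreme point of `conv S + ℝ²₊` is separated from the rest of the set by a functional with
nonnegative coefficients, hence it is the unique minimiser over `S` of a weighted sum
`(1 - t) x + t y`. Call such points supported. For a Minkowski sum `P + Q`, a supported point
with weight `t` splits into the supported points of `P` and `Q` with weight `t`, and the set of
weights at which a given point is the unique minimiser is an interval; sweeping `t` from left to
right, each new supported point of `P + Q` changes the minimiser in `P` or in `Q` for good, so
`P + Q` has at most as many supported points as `P` and `Q` together.

Identifying source and sink with one node of the graph, s–t paths become walks with `ℓ + 1`
edges. Splitting a walk at its middle node writes its cost set as a union over the `w` middle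
nodes of Minkowski sums of cost sets of walks with at most `⌈(ℓ + 1) / 2⌉` edges, so each
halving of the length multiplies the number of supported points by at most `2w`.
-/

open Pointwise

/-- The cost that a cost system (start costs `a`, transition costs `t`, end costs `b`)
of a layered graph with `ℓ` layers of width `w` assigns to an s–t path
`π : Fin ℓ → Fin w` (one node per layer):
`a(π 0) + Σ_{i=0}^{ℓ-2} t(i, π i, π (i+1)) + b(π (ℓ-1))`. -/
def layeredCost (ℓ w : ℕ) (hℓ : 1 ≤ ℓ) (a : Fin w → ℝ)
    (t : Fin (ℓ - 1) → Fin w → Fin w → ℝ) (b : Fin w → ℝ)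
    (π : Fin ℓ → Fin w) : ℝ :=
  a (π ⟨0, by omega⟩) +
    (∑ i : Fin (ℓ - 1),
      t i (π ⟨i.val, by have := i.isLt; omega⟩) (π ⟨i.val + 1, by have := i.isLt; omega⟩)) +
    b (π ⟨ℓ - 1, by omega⟩)

theorem Finset.card_le_card_image_add_card_image_of_ordConnected {ι κ β γ : Type*}
    [LinearOrder κ] [DecidableEq ι] [DecidableEq β] [DecidableEq γ]
    (s : Finset ι) (key : ι → κ) (f : ι → β) (g : ι → γ)
    (hf : ∀ i ∈ s, ∀ j ∈ s, ∀ k ∈ s, key i ≤ key j → key j ≤ key k → f i = f k → f j = f i)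
    (hg : ∀ i ∈ s, ∀ j ∈ s, ∀ k ∈ s, key i ≤ key j → key j ≤ key k → g i = g k → g j = g i)
    (hfg : Set.InjOn (fun i => (f i, g i)) s) :
    s.card ≤ (s.image f).card + (s.image g).card := by
  induction s using Finset.induction_on_max_value key with
  | empty => simp
  | insert a s ha hmax ih =>
    have hsub : s ⊆ insert a s := Finset.subset_insert a s
    have ha' : a ∈ insert a s := Finset.mem_insert_self a s
    specialize ih (fun i hi j hj k hk => hf i (hsub hi) j (hsub hj) k (hsub hk))
      (fun i hi j hj k hk => hg i (hsub hi) j (hsub hj) k (hsub hk))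
      (hfg.mono (Finset.coe_subset.2 hsub))
    -- the element of `s` with the larger key among witnesses for `f a` and `g a` would equal `a`
    have hnew : f a ∉ s.image f ∨ g a ∉ s.image g := by
      by_contra! h
      obtain ⟨i, hi, hfi⟩ := Finset.mem_image.1 h.1
      obtain ⟨j, hj, hgj⟩ := Finset.mem_image.1 h.2
      have hs : ∀ k ∈ s, f k = f a → g k = g a → False := fun k hk hfk hgk =>
        ha (hfg (hsub hk) ha' (Prod.ext hfk hgk) ▸ hk)
      rcases le_total (key i) (key j) with hij | hji
      · exact hs j hj ((hf i (hsub hi) j (hsub hj) a ha' hij (hmax j hj) hfi).trans hfi) hgj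
      · exact hs i hi hfi ((hg j (hsub hj) i (hsub hi) a ha' hji (hmax i hi) hgj).trans hgj)
    have hf_mono := Finset.card_le_card (Finset.subset_insert (f a) (s.image f))
    have hg_mono := Finset.card_le_card (Finset.subset_insert (g a) (s.image g))
    rw [Finset.card_insert_of_notMem ha, Finset.image_insert, Finset.image_insert]
    rcases hnew with hnew | hnew <;> rw [Finset.card_insert_of_notMem hnew] <;> omega

theorem mem_of_mem_extremePoints_convexHull_add_nonneg {E : Type*} [AddCommGroup E]
    [PartialOrder E] [IsOrderedAddMonoid E] [Module ℝ E] {S : Set E} {p : E}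
    (hp : p ∈ (convexHull ℝ S + {v | 0 ≤ v}).extremePoints ℝ) : p ∈ S := by
  obtain ⟨q, hq, c, hc, rfl⟩ := Set.mem_add.1 hp.1
  have hsub : convexHull ℝ S ⊆ convexHull ℝ S + {v | 0 ≤ v} := Set.subset_add_left _ le_rfl
  have hq_mem : q ∈ convexHull ℝ S + {v | 0 ≤ v} := hsub hq
  have hqcc_mem : q + (c + c) ∈ convexHull ℝ S + {v | 0 ≤ v} :=
    ⟨q, hq, c + c, add_nonneg hc hc, rfl⟩
  -- `q + c` is the midpoint of `q` and `q + 2c`, so extremality forces `c = 0`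
  have hseg : q + c ∈ openSegment ℝ q (q + (c + c)) :=
    ⟨1 / 2, 1 / 2, by norm_num, by norm_num, by norm_num, by module⟩
  have hc0 : c = 0 := by
    simpa using ((mem_extremePoints.1 hp).2 q hq_mem _ hqcc_mem hseg).1
  subst hc0
  rw [add_zero] at hp ⊢
  exact extremePoints_convexHull_subset
    (inter_extremePoints_subset_extremePoints_of_subset hsub ⟨hq, hp⟩)

theorem LinearMap.nonneg_of_forall_lt_apply_add_smul {E : Type*} [AddCommGroup E] [Module ℝ E]
    (f : E →ₗ[ℝ] ℝ) (y c : E) (u : ℝ) (h : ∀ n : ℕ, u < f (y + (n : ℝ) • c)) : 0 ≤ f c := by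
  by_contra! hneg
  obtain ⟨n, hn⟩ := exists_nat_gt ((f y - u) / -f c)
  have hu := h n
  rw [div_lt_iff₀ (neg_pos.2 hneg)] at hn
  simp only [map_add, map_smul, smul_eq_mul] at hu
  linarith

namespace Bicriteria

def weightedSum (t : ℝ) (p : Fin 2 → ℝ) : ℝ := (1 - t) * p 0 + t * p 1

lemma weightedSum_add (t : ℝ) (p q : Fin 2 → ℝ) :
    weightedSum t (p + q) = weightedSum t p + weightedSum t q := by
  simp only [weightedSum, Pi.add_apply]; ring

def IsUniqueWeightedMin (S : Set (Fin 2 → ℝ)) (t : ℝ) (p : Fin 2 → ℝ) : Prop :=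
  p ∈ S ∧ ∀ q ∈ S, q ≠ p → weightedSum t p < weightedSum t q

def supportedPoints (S : Set (Fin 2 → ℝ)) : Set (Fin 2 → ℝ) :=
  {p | ∃ t, IsUniqueWeightedMin S t p}

variable {S P Q : Set (Fin 2 → ℝ)} {t : ℝ} {p q : Fin 2 → ℝ}

lemma IsUniqueWeightedMin.eq (hp : IsUniqueWeightedMin S t p) (hq : IsUniqueWeightedMin S t q) :
    p = q := by
  by_contra hne
  exact (hp.2 q hq.1 (Ne.symm hne)).asymm (hq.2 p hp.1 hne)

lemma IsUniqueWeightedMin.of_le_of_le {t₁ t₂ t₃ : ℝ} (h₁ : IsUniqueWeightedMin S t₁ p)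
    (h₃ : IsUniqueWeightedMin S t₃ p) (h₁₂ : t₁ ≤ t₂) (h₂₃ : t₂ ≤ t₃) :
    IsUniqueWeightedMin S t₂ p := by
  refine ⟨h₁.1, fun q hq hne => ?_⟩
  have e₁ := h₁.2 q hq hne
  have e₃ := h₃.2 q hq hne
  simp only [weightedSum] at *
  -- the difference of the two sides is affine in the weight
  rcases le_total (p 1 - p 0) (q 1 - q 0) with h | h <;> nlinarith

lemma IsUniqueWeightedMin.of_add_left (h : IsUniqueWeightedMin (P + Q) t (p + q))
    (hp : p ∈ P) (hq : q ∈ Q) : IsUniqueWeightedMin P t p := by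
  refine ⟨hp, fun p' hp' hne => ?_⟩
  have := h.2 (p' + q) (Set.add_mem_add hp' hq) (fun h' => hne (add_right_cancel h'))
  rw [weightedSum_add, weightedSum_add] at this
  linarith

lemma IsUniqueWeightedMin.of_add_right (h : IsUniqueWeightedMin (P + Q) t (p + q))
    (hp : p ∈ P) (hq : q ∈ Q) : IsUniqueWeightedMin Q t q := by
  rw [add_comm P, add_comm p] at h
  exact h.of_add_left hq hp

lemma supportedPoints_subset (S : Set (Fin 2 → ℝ)) : supportedPoints S ⊆ S :=
  fun _ ⟨_, h⟩ => h.1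

lemma supportedPoints_iUnion_subset {ι : Type*} (S : ι → Set (Fin 2 → ℝ)) :
    supportedPoints (⋃ i, S i) ⊆ ⋃ i, supportedPoints (S i) := by
  rintro p ⟨t, hp, hmin⟩
  obtain ⟨i, hi⟩ := Set.mem_iUnion.1 hp
  exact Set.mem_iUnion.2 ⟨i, t, hi, fun q hq => hmin q (Set.mem_iUnion.2 ⟨i, hq⟩)⟩

theorem ncard_supportedPoints_add_le (hP : P.Finite) (hQ : Q.Finite) :
    (supportedPoints (P + Q)).ncard ≤ (supportedPoints P).ncard + (supportedPoints Q).ncard := by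
  classical
  have hE : (supportedPoints (P + Q)).Finite := (hP.add hQ).subset (supportedPoints_subset _)
  have hsplit : ∀ e ∈ supportedPoints (P + Q), ∃ t u v, u + v = e ∧
      IsUniqueWeightedMin P t u ∧ IsUniqueWeightedMin Q t v := by
    rintro e ⟨t, he⟩
    obtain ⟨u, hu, v, hv, rfl⟩ := Set.mem_add.1 he.1
    exact ⟨t, u, v, rfl, he.of_add_left hu hv, he.of_add_right hu hv⟩
  choose! t u v huv huP hvQ using hsplit
  have hcard := Finset.card_le_card_image_add_card_image_of_ordConnected hE.toFinset t u v
    (fun e₁ h₁ e₂ h₂ e₃ h₃ h₁₂ h₂₃ h₁₃ => by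
      simp only [Set.Finite.mem_toFinset] at h₁ h₂ h₃
      exact (huP e₂ h₂).eq ((huP e₁ h₁).of_le_of_le (h₁₃ ▸ huP e₃ h₃) h₁₂ h₂₃))
    (fun e₁ h₁ e₂ h₂ e₃ h₃ h₁₂ h₂₃ h₁₃ => by
      simp only [Set.Finite.mem_toFinset] at h₁ h₂ h₃
      exact (hvQ e₂ h₂).eq ((hvQ e₁ h₁).of_le_of_le (h₁₃ ▸ hvQ e₃ h₃) h₁₂ h₂₃))
    (fun e₁ h₁ e₂ h₂ h => by
      simp only [Set.Finite.coe_toFinset, Prod.mk.injEq] at h₁ h₂ h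
      rw [← huv e₁ h₁, ← huv e₂ h₂, h.1, h.2])
  have hcard_image : ∀ (f : (Fin 2 → ℝ) → Fin 2 → ℝ) (T : Set (Fin 2 → ℝ)), T.Finite →
      (∀ e ∈ supportedPoints (P + Q), f e ∈ T) → (hE.toFinset.image f).card ≤ T.ncard :=
    fun f T hT hf => by
      rw [← Set.ncard_coe_finset, Finset.coe_image, Set.Finite.coe_toFinset]
      exact Set.ncard_le_ncard (Set.image_subset_iff.2 hf) hT
  rw [Set.ncard_eq_toFinset_card _ hE]
  exact hcard.trans (add_le_add
    (hcard_image u _ (hP.subset (supportedPoints_subset P)) fun e he => ⟨t e, huP e he⟩)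
    (hcard_image v _ (hQ.subset (supportedPoints_subset Q)) fun e he => ⟨t e, hvQ e he⟩))

lemma weightedSum_lt_weightedSum_of_lt {c₀ c₁ : ℝ} (h₀ : 0 ≤ c₀) (h₁ : 0 ≤ c₁)
    (h : c₀ * p 0 + c₁ * p 1 < c₀ * q 0 + c₁ * q 1) :
    weightedSum (c₁ / (c₀ + c₁)) p < weightedSum (c₁ / (c₀ + c₁)) q := by
  have hc : 0 < c₀ + c₁ := by
    by_contra! hc
    obtain ⟨rfl, rfl⟩ : c₀ = 0 ∧ c₁ = 0 := ⟨by linarith, by linarith⟩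
    simp at h
  have hscale : ∀ x, weightedSum (c₁ / (c₀ + c₁)) x = (c₀ * x 0 + c₁ * x 1) / (c₀ + c₁) := by
    intro x
    simp only [weightedSum]
    field_simp
    ring
  rw [hscale, hscale]
  exact div_lt_div_of_pos_right h hc

theorem extremePoints_subset_supportedPoints (hS : S.Finite) :
    (convexHull ℝ S + {v | 0 ≤ v}).extremePoints ℝ ⊆ supportedPoints S := by
  intro p hp
  set W := convexHull ℝ (S \ {p}) + {v : Fin 2 → ℝ | 0 ≤ v}
  have hpW : p ∉ W := fun hpW => (mem_of_mem_extremePoints_convexHull_add_nonneg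
    (inter_extremePoints_subset_extremePoints_of_subset
      (Set.add_subset_add_right (convexHull_mono Set.sdiff_subset)) ⟨hpW, hp⟩)).2 rfl
  have hW_closed : IsClosed W :=
    isClosed_Ici.add_left_of_isCompact (hS.sdiff.isCompact_convexHull ℝ)
  obtain ⟨f, u, hfp, hfW⟩ :=
    geometric_hahn_banach_point_closed ((convex_convexHull ℝ _).add (convex_Ici 0)) hW_closed hpW
  let e : Fin 2 → Fin 2 → ℝ := fun i j => if i = j then 1 else 0
  have hf : ∀ x, f x = f (e 0) * x 0 + f (e 1) * x 1 := fun x => by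
    rw [← ContinuousLinearMap.coe_coe, LinearMap.pi_apply_eq_sum_univ, Fin.sum_univ_two]
    simp only [smul_eq_mul, mul_comm]
    rfl
  refine ⟨f (e 1) / (f (e 0) + f (e 1)), mem_of_mem_extremePoints_convexHull_add_nonneg hp,
    fun q hq hne => ?_⟩
  have hqW : q ∈ W := Set.subset_add_left _ le_rfl (subset_convexHull ℝ _ ⟨hq, hne⟩)
  have he : ∀ i, 0 ≤ e i := fun i j => by
    simp only [e]
    split_ifs <;> norm_num
  have hnonneg : ∀ i, 0 ≤ f (e i) := fun i =>
    f.toLinearMap.nonneg_of_forall_lt_apply_add_smul q (e i) u fun n => by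
      obtain ⟨y, hy, d, hd, rfl⟩ := hqW
      refine hfW _ ⟨y, hy, d + (n : ℝ) • e i, ?_, by rw [add_assoc]⟩
      exact add_nonneg hd (smul_nonneg n.cast_nonneg (he i))
  have hlt := hfp.trans (hfW q hqW)
  rw [hf p, hf q] at hlt
  exact weightedSum_lt_weightedSum_of_lt (hnonneg 0) (hnonneg 1) hlt

theorem ncard_extremePoints_le_ncard_supportedPoints (hS : S.Finite) :
    ((convexHull ℝ S + {v | 0 ≤ v}).extremePoints ℝ).ncard ≤ (supportedPoints S).ncard :=
  Set.ncard_le_ncard (extremePoints_subset_supportedPoints hS)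
    (hS.subset (supportedPoints_subset S))

section Walks

variable {α M : Type*} [AddCommMonoid M]

def walkCost {m : ℕ} (c : Fin m → α → α → M) (π : Fin (m + 1) → α) : M :=
  ∑ i, c i (π i.castSucc) (π i.succ)

def walkCosts {m : ℕ} (c : Fin m → α → α → M) (u v : α) : Set M :=
  {x | ∃ π : Fin (m + 1) → α, π 0 = u ∧ π (Fin.last m) = v ∧ walkCost c π = x}

lemma finite_walkCosts [Finite α] {m : ℕ} (c : Fin m → α → α → M) (u v : α) :
    (walkCosts c u v).Finite :=
  (Set.finite_range (walkCost c)).subset fun _ ⟨π, _, _, hπ⟩ => ⟨π, hπ⟩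

lemma walkCosts_one (c : Fin 1 → α → α → M) (u v : α) : walkCosts c u v = {c 0 u v} := by
  ext x
  constructor
  · rintro ⟨π, rfl, rfl, rfl⟩
    simp [walkCost]
  · rintro rfl
    exact ⟨![u, v], rfl, rfl, by simp [walkCost]⟩

lemma walkCost_add {p q : ℕ} (c : Fin (p + q) → α → α → M) (π : Fin (p + q + 1) → α) :
    walkCost c π = walkCost (fun i => c (Fin.castAdd q i)) (fun i => π (Fin.castLE (by omega) i)) +
      walkCost (fun j => c (Fin.natAdd p j)) (fun j => π (Fin.natAdd p j)) :=
  Fin.sum_univ_add _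

lemma exists_joined_walk {p q : ℕ} (π₁ : Fin (p + 1) → α) (π₂ : Fin (q + 1) → α)
    (h : π₁ (Fin.last p) = π₂ 0) :
    ∃ π : Fin (p + q + 1) → α, (fun i => π (Fin.castLE (by omega) i)) = π₁ ∧
      (fun j => π (Fin.natAdd p j)) = π₂ := by
  refine ⟨fun k => if hk : (k : ℕ) ≤ p then π₁ ⟨k, by omega⟩ else π₂ ⟨k - p, by omega⟩, ?_, ?_⟩
  · ext i
    simp [Nat.lt_succ_iff.1 i.isLt]
  · ext j
    rcases Fin.eq_zero_or_eq_succ j with rfl | ⟨j, rfl⟩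
    · simpa [Fin.last] using h
    · simp [Fin.succ]

lemma walkCosts_add {p q : ℕ} (c : Fin (p + q) → α → α → M) (u v : α) :
    walkCosts c u v = ⋃ y, walkCosts (fun i => c (Fin.castAdd q i)) u y +
      walkCosts (fun j => c (Fin.natAdd p j)) y v := by
  ext x
  simp only [Set.mem_iUnion]
  constructor
  · rintro ⟨π, rfl, rfl, rfl⟩
    refine ⟨π (Fin.natAdd p (0 : Fin (q + 1))), _, ⟨_, ?_, rfl, rfl⟩, _, ⟨_, rfl, ?_, rfl⟩,
      (walkCost_add c π).symm⟩ <;> simp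
  · rintro ⟨y, _, ⟨π₁, hu, hy₁, rfl⟩, _, ⟨π₂, hy₂, hv, rfl⟩, rfl⟩
    obtain ⟨π, rfl, rfl⟩ := exists_joined_walk π₁ π₂ (hy₁.trans hy₂.symm)
    refine ⟨π, ?_, ?_, walkCost_add c π⟩
    · simpa using hu
    · simpa using hv

end Walks

section Layered

variable {α M : Type*}

-- `o` stands for both the source and the sink; accordingly the first edge of `layeredEdgeCost`
-- ignores its tail and the last one its head.
def stWalk {n : ℕ} (o : α) (π : Fin n → α) : Fin (n + 2) → α := Fin.cons o (Fin.snoc π o)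

def layeredEdgeCost {n : ℕ} (a : α → M) (t : Fin n → α → α → M) (b : α → M) :
    Fin (n + 2) → α → α → M :=
  Fin.cons (fun _ y => a y) (Fin.snoc t fun x _ => b x)

lemma walkCosts_eq_range_stWalk [AddCommMonoid M] {n : ℕ} (c : Fin (n + 2) → α → α → M) (o : α) :
    walkCosts c o o = Set.range fun π : Fin (n + 1) → α => walkCost c (stWalk o π) := by
  ext x
  constructor
  · rintro ⟨ρ, h₀, hlast, rfl⟩
    refine ⟨Fin.init (Fin.tail ρ), congrArg (walkCost c) ?_⟩
    conv_rhs => rw [← Fin.cons_self_tail ρ, ← Fin.snoc_init_self (Fin.tail ρ)]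
    simp [stWalk, h₀, Fin.tail, ← hlast]
  · rintro ⟨π, rfl⟩
    exact ⟨stWalk o π, rfl, by simp [stWalk], rfl⟩

lemma walkCost_pair {m : ℕ} (c₁ c₂ : Fin m → α → α → ℝ) (π : Fin (m + 1) → α) :
    walkCost (fun i x y => ![c₁ i x y, c₂ i x y]) π = ![walkCost c₁ π, walkCost c₂ π] := by
  ext j
  fin_cases j <;> simp [walkCost, Finset.sum_apply]

lemma walkCost_layeredEdgeCost [AddCommMonoid M] {n : ℕ} (a : α → M) (t : Fin n → α → α → M)
    (b : α → M) (o : α) (π : Fin (n + 1) → α) :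
    walkCost (layeredEdgeCost a t b) (stWalk o π) =
      a (π 0) + ∑ i, t i (π i.castSucc) (π i.succ) + b (π (Fin.last n)) := by
  rw [walkCost, Fin.sum_univ_succ, Fin.sum_univ_castSucc]
  simp only [stWalk, layeredEdgeCost, ← Fin.succ_castSucc, Fin.cons_succ, Fin.castSucc_zero,
    Fin.cons_zero, Fin.snoc_castSucc, Fin.snoc_last]
  simp only [Fin.succ_castSucc, Fin.snoc_castSucc, add_assoc]
  rfl

lemma layeredCost_eq_walkCost {n w : ℕ} (hℓ : 1 ≤ n + 1) (a : Fin w → ℝ)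
    (t : Fin n → Fin w → Fin w → ℝ) (b : Fin w → ℝ) (π : Fin (n + 1) → Fin w) (o : Fin w) :
    layeredCost (n + 1) w hℓ a t b π = walkCost (layeredEdgeCost a t b) (stWalk o π) := by
  rw [walkCost_layeredEdgeCost]
  rfl

lemma image_layeredCost_eq_walkCosts {n w : ℕ} (hℓ : 1 ≤ n + 1) (o : Fin w)
    (a₁ : Fin w → ℝ) (t₁ : Fin n → Fin w → Fin w → ℝ) (b₁ : Fin w → ℝ)
    (a₂ : Fin w → ℝ) (t₂ : Fin n → Fin w → Fin w → ℝ) (b₂ : Fin w → ℝ) :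
    (fun π : Fin (n + 1) → Fin w =>
        ![layeredCost (n + 1) w hℓ a₁ t₁ b₁ π, layeredCost (n + 1) w hℓ a₂ t₂ b₂ π]) '' Set.univ =
      walkCosts (fun i x y => ![layeredEdgeCost a₁ t₁ b₁ i x y, layeredEdgeCost a₂ t₂ b₂ i x y])
        o o := by
  simp only [walkCosts_eq_range_stWalk, walkCost_pair, Set.image_univ,
    layeredCost_eq_walkCost hℓ _ _ _ _ o]

end Layered

theorem ncard_supportedPoints_walkCosts_le {α : Type*} [Fintype α] {m : ℕ} (hm : 1 ≤ m)
    (c : Fin m → α → α → Fin 2 → ℝ) (u v : α) :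
    (supportedPoints (walkCosts c u v)).ncard ≤ (2 * Fintype.card α) ^ Nat.clog 2 m := by
  induction m using Nat.strong_induction_on generalizing u v with
  | _ m ih =>
  rcases hm.eq_or_lt with rfl | hm
  · rw [walkCosts_one, Nat.clog_one_right, pow_zero]
    exact (Set.ncard_le_ncard (supportedPoints_subset _)).trans (Set.ncard_singleton _).le
  obtain ⟨p, q, hpq, hq, rfl⟩ : ∃ p q, p ≤ q ∧ q = (m + 1) / 2 ∧ m = p + q :=
    ⟨m / 2, (m + 1) / 2, by omega, rfl, by omega⟩
  have hclog : Nat.clog 2 (p + q) = Nat.clog 2 q + 1 := by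
    rw [Nat.clog_of_two_le one_lt_two hm]
    congr 2
    omega
  have hα : 0 < Fintype.card α := Fintype.card_pos_iff.2 ⟨u⟩
  rw [walkCosts_add, hclog]
  set L := fun y => walkCosts (fun i => c (Fin.castAdd q i)) u y
  set R := fun y => walkCosts (fun j => c (Fin.natAdd p j)) y v
  have hL : ∀ y, (supportedPoints (L y)).ncard ≤ (2 * Fintype.card α) ^ Nat.clog 2 q := fun y =>
    (ih p (by omega) (by omega) _ u y).trans
      (Nat.pow_le_pow_right (by omega) (Nat.clog_mono_right 2 hpq))
  have hR : ∀ y, (supportedPoints (R y)).ncard ≤ (2 * Fintype.card α) ^ Nat.clog 2 q :=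
    fun y => ih q (by omega) (by omega) _ y v
  calc _ ≤ (⋃ y, supportedPoints (L y + R y)).ncard :=
        Set.ncard_le_ncard (supportedPoints_iUnion_subset _) (Set.finite_iUnion fun y =>
          ((finite_walkCosts _ _ _).add (finite_walkCosts _ _ _)).subset (supportedPoints_subset _))
    _ ≤ ∑ y, (supportedPoints (L y + R y)).ncard := Set.ncard_iUnion_le_of_fintype _
    _ ≤ ∑ _y : α, 2 * (2 * Fintype.card α) ^ Nat.clog 2 q := Finset.sum_le_sum fun y _ =>
        (ncard_supportedPoints_add_le (finite_walkCosts _ _ _) (finite_walkCosts _ _ _)).trans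
          (by linarith [hL y, hR y])
    _ = (2 * Fintype.card α) ^ (Nat.clog 2 q + 1) := by
        rw [Finset.sum_const, Finset.card_univ, smul_eq_mul, pow_succ]
        ring

end Bicriteria

open Bicriteria in
/-- for a layered graph with `ℓ` layers of width `w` and two cost systems
with cost functions `f` and `g`, the set `V = conv({(f(π), g(π))}) + ℝ²₊` has at most
`(2w)^⌈log₂(ℓ+1)⌉` extreme points. -/
theorem layered_graph_extreme_points_bound
    (ℓ w : ℕ) (hℓ : 1 ≤ ℓ) (hw : 1 ≤ w)
    (a₁ : Fin w → ℝ) (t₁ : Fin (ℓ - 1) → Fin w → Fin w → ℝ) (b₁ : Fin w → ℝ)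
    (a₂ : Fin w → ℝ) (t₂ : Fin (ℓ - 1) → Fin w → Fin w → ℝ) (b₂ : Fin w → ℝ) :
    ((convexHull ℝ
        ((fun π : Fin ℓ → Fin w =>
            ![layeredCost ℓ w hℓ a₁ t₁ b₁ π, layeredCost ℓ w hℓ a₂ t₂ b₂ π]) ''
          Set.univ) +
      {v : Fin 2 → ℝ | 0 ≤ v}).extremePoints ℝ).ncard ≤
      (2 * w) ^ (Nat.clog 2 (ℓ + 1)) := by
  obtain ⟨n, rfl⟩ : ∃ n, ℓ = n + 1 := ⟨ℓ - 1, by omega⟩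
  rw [image_layeredCost_eq_walkCosts hℓ ⟨0, hw⟩]
  refine (ncard_extremePoints_le_ncard_supportedPoints (finite_walkCosts _ _ _)).trans ?_
  simpa using ncard_supportedPoints_walkCosts_le (α := Fin w) (Nat.le_add_left 1 (n + 1)) _ _ _
end

section
/- Let n ≥ 1, let X ⊆ {0,1}ⁿ be finite and nonempty, let ĉ ∈ ℝⁿ with ĉ ≥ 0 componentwise, and let d ∈ ℝⁿ with dᵢ > 0 for all i. Then there exists a set S ⊆ X with |S| ≤ n such that for every λ ≥ 0 some x ∈ S minimizes ĉᵀx + λ·maxᵢ dᵢxᵢ over X; that is, the variable-sized min-max robust problem with the generalized Manhattan norm admits a solution set of size at most n. -/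
/-!
For `λ` fixed, take an optimal `x*` and replace it by a solution of least nominal cost among
those with the same worst-case term `g x* = maxᵢ dᵢ x*ᵢ`; this does not increase the objective.
So one cost-minimiser per value of `g` on `X` suffices. If `0 ∈ X` it is optimal for every
`λ ≥ 0`; otherwise `g x` is attained at a coordinate with `xᵢ = 1`, so `g` only takes values
among `d₁, …, dₙ`.
-/

open Finset

theorem exists_subset_card_le_card_image_forall_exists_minimizer {α : Type*} [DecidableEq α]
    (X : Finset α) (hX : X.Nonempty) (f g : α → ℝ) :
    ∃ S ⊆ X, #S ≤ #(X.image g) ∧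
      ∀ lam : ℝ, ∃ x ∈ S, ∀ y ∈ X, f x + lam * g x ≤ f y + lam * g y := by
  have level_min : ∀ v ∈ X.image g, ∃ s ∈ X.filter (g · = v),
      ∀ y ∈ X.filter (g · = v), f s ≤ f y := by
    intro v hv
    obtain ⟨x, hx, rfl⟩ := mem_image.mp hv
    exact (X.filter (g · = g x)).exists_min_image f ⟨x, mem_filter.mpr ⟨hx, rfl⟩⟩
  choose s hs hs_min using level_min
  refine ⟨(X.image g).attach.image fun v => s v.1 v.2, ?_, card_image_le.trans card_attach.le, ?_⟩
  · intro x hx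
    obtain ⟨v, -, rfl⟩ := mem_image.mp hx
    exact (mem_filter.mp (hs v.1 v.2)).1
  · intro lam
    obtain ⟨x, hx, hx_min⟩ := X.exists_min_image (fun x => f x + lam * g x) hX
    have hgx : g x ∈ X.image g := mem_image_of_mem g hx
    refine ⟨s (g x) hgx, mem_image.mpr ⟨⟨g x, hgx⟩, mem_attach _ _, rfl⟩, fun y hy => ?_⟩
    have hs_level : g (s (g x) hgx) = g x := (mem_filter.mp (hs (g x) hgx)).2
    have hs_le : f (s (g x) hgx) ≤ f x := hs_min (g x) hgx x (mem_filter.mpr ⟨hx, rfl⟩)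
    calc f (s (g x) hgx) + lam * g (s (g x) hgx) ≤ f x + lam * g x := by
          rw [hs_level]; linarith
      _ ≤ f y + lam * g y := hx_min y hy

theorem iSup_mul_mem_image_of_ne_zero {ι : Type*} [Fintype ι] (d x : ι → ℝ)
    (hd : ∀ i, 0 ≤ d i) (hx : ∀ i, x i = 0 ∨ x i = 1) (hx0 : x ≠ 0) :
    (⨆ i, d i * x i) ∈ univ.image d := by
  obtain ⟨i, hi⟩ := Function.ne_iff.mp hx0
  have hxi : x i = 1 := (hx i).resolve_left hi
  have : Nonempty ι := ⟨i⟩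
  obtain ⟨j, hj⟩ := exists_eq_ciSup_of_finite (f := fun i => d i * x i)
  rcases hx j with hxj | hxj
  · have hle : d i * x i ≤ ⨆ i, d i * x i :=
      le_ciSup (f := fun i => d i * x i) (Finite.bddAbove_range _) i
    rw [← hj, hxj, hxi] at hle
    rw [← hj, hxj]
    exact mem_image.mpr ⟨i, mem_univ _, by linarith [hd i]⟩
  · exact mem_image.mpr ⟨j, mem_univ _, by rw [← hj, hxj, mul_one]⟩

/-- the variable-sized min-max robust problem with the generalized
Manhattan norm (objective `ĉᵀx + λ·maxᵢ dᵢxᵢ`) admits a solution set `S ⊆ X` with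
`|S| ≤ n` containing an optimal solution for every uncertainty size `λ ≥ 0`. -/
theorem variable_sized_generalized_manhattan_solution_set
    {n : ℕ} (hn : 1 ≤ n) (X : Finset (Fin n → ℝ)) (hXne : X.Nonempty)
    (hX01 : ∀ x ∈ X, ∀ i, x i = 0 ∨ x i = 1)
    (chat : Fin n → ℝ) (hchat : ∀ i, 0 ≤ chat i)
    (d : Fin n → ℝ) (hd : ∀ i, 0 < d i) :
    ∃ S : Finset (Fin n → ℝ), S ⊆ X ∧ S.card ≤ n ∧
      ∀ lam : ℝ, 0 ≤ lam → ∃ x ∈ S, ∀ y ∈ X,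
        (∑ i, chat i * x i) + lam * (⨆ i, d i * x i) ≤
          (∑ i, chat i * y i) + lam * (⨆ i, d i * y i) := by
  classical
  by_cases h0 : (0 : Fin n → ℝ) ∈ X
  · refine ⟨{0}, singleton_subset_iff.mpr h0, by simpa using hn,
      fun lam hlam => ⟨0, mem_singleton_self _, fun y hy => ?_⟩⟩
    have hy_nonneg : ∀ i, 0 ≤ y i := fun i => by rcases hX01 y hy i with h | h <;> simp [h]
    simp only [Pi.zero_apply, mul_zero, sum_const_zero, Real.iSup_const_zero, zero_add]
    exact add_nonneg (sum_nonneg fun i _ => mul_nonneg (hchat i) (hy_nonneg i))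
      (mul_nonneg hlam (Real.iSup_nonneg fun i => mul_nonneg (hd i).le (hy_nonneg i)))
  · obtain ⟨S, hSX, hS_card, hS_min⟩ :=
      exists_subset_card_le_card_image_forall_exists_minimizer X hXne
      (fun x => ∑ i, chat i * x i) (fun x => ⨆ i, d i * x i)
    have hg : X.image (fun x => ⨆ i, d i * x i) ⊆ univ.image d := by
      simp only [image_subset_iff]
      exact fun x hx => iSup_mul_mem_image_of_ne_zero d x (fun i => (hd i).le) (hX01 x hx)
        (ne_of_mem_of_not_mem hx h0)
    refine ⟨S, hSX, hS_card.trans ((card_le_card hg).trans ?_), fun lam _ => hS_min lam⟩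
    simpa using card_image_le (s := univ) (f := d)
end

section
/- Let X ⊆ {0,1}ⁿ be finite and nonempty, let c ∈ ℝⁿ, and let d ∈ ℝⁿ with d ≥ 0 componentwise. Let V₁ = conv({(cᵀx, √(dᵀx)) : x ∈ X}) + ℝ²₊ and V₂ = conv({(cᵀx, dᵀx) : x ∈ X}) + ℝ²₊. If x' ∈ X is such that (cᵀx', √(dᵀx')) is an extreme point of V₁, then (cᵀx', dᵀx') is an extreme point of V₂; that is, every efficient extreme solution of min_{x∈X}(cᵀx, √(dᵀx)) is an efficient extreme solution of min_{x∈X}(cᵀx, dᵀx). -/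
open Pointwise Set

/-!
The map `sqrtSnd : (u, t) ↦ (u, √t)` is monotone, injective and concave on the half-plane
`t ≥ 0`, and it sends `V₂` into `V₁`. If `p = a • q + b • r` with `q, r ∈ V₂`, concavity gives
`sqrtSnd p = a • (sqrtSnd q + δ) + b • (sqrtSnd r + δ)` for some `δ ≥ 0`, and both points lie in
the upper set `V₁`. Extremality of `sqrtSnd p` forces `sqrtSnd q = sqrtSnd r`, hence `q = r = p`.
-/

section Ordered

variable {𝕜 E F : Type*} [AddCommGroup E] [AddCommGroup F] [PartialOrder F]

theorem ConcaveOn.convex_inter_preimage [Semiring 𝕜] [PartialOrder 𝕜] [Module 𝕜 E] [Module 𝕜 F]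
    {f : E → F} {s : Set E} {W : Set F}
    (hf : ConcaveOn 𝕜 s f) (hW : Convex 𝕜 W) (hWup : IsUpperSet W) :
    Convex 𝕜 (s ∩ f ⁻¹' W) := by
  rintro x ⟨hxs, hxW⟩ y ⟨hys, hyW⟩ a b ha hb hab
  exact ⟨hf.1 hxs hys ha hb hab, hWup (hf.2 hxs hys ha hb hab) (hW hxW hyW ha hb hab)⟩

theorem subset_convexHull_add_Ici_zero [Semiring 𝕜] [PartialOrder 𝕜] [Module 𝕜 F] (S : Set F) :
    S ⊆ convexHull 𝕜 S + Ici 0 :=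
  fun s hs => ⟨s, subset_convexHull 𝕜 S hs, 0, self_mem_Ici, add_zero s⟩

variable [IsOrderedAddMonoid F]

theorem convex_convexHull_add_Ici_zero [Semiring 𝕜] [PartialOrder 𝕜] [Module 𝕜 F]
    [IsOrderedModule 𝕜 F] (S : Set F) : Convex 𝕜 (convexHull 𝕜 S + Ici 0) :=
  (convex_convexHull 𝕜 S).add (convex_Ici 0)

theorem isUpperSet_convexHull_add_Ici_zero [Semiring 𝕜] [PartialOrder 𝕜] [Module 𝕜 F]
    (S : Set F) : IsUpperSet (convexHull 𝕜 S + Ici 0) :=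
  (isUpperSet_Ici 0).add_left

theorem convexHull_add_Ici_zero_subset [Semiring 𝕜] [PartialOrder 𝕜] [Module 𝕜 F] {S T : Set F}
    (hT : Convex 𝕜 T) (hTup : IsUpperSet T) (hST : S ⊆ T) : convexHull 𝕜 S + Ici 0 ⊆ T := by
  rintro _ ⟨u, hu, v, hv, rfl⟩
  exact hTup (le_add_of_nonneg_right hv) (convexHull_min hST hT hu)

theorem mem_extremePoints_of_concaveOn_of_injOn [Ring 𝕜] [PartialOrder 𝕜] [Module 𝕜 E]
    [Module 𝕜 F] {f : E → F} {V : Set E} {W : Set F}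
    (hf : ConcaveOn 𝕜 V f) (hinj : InjOn f V) (hmaps : MapsTo f V W) (hW : IsUpperSet W)
    {p : E} (hp : p ∈ V) (hfp : f p ∈ W.extremePoints 𝕜) : p ∈ V.extremePoints 𝕜 := by
  refine mem_extremePoints.2 ⟨hp, ?_⟩
  rintro q hq r hr ⟨a, b, ha, hb, hab, rfl⟩
  set δ := f (a • q + b • r) - (a • f q + b • f r)
  have hδ : 0 ≤ δ := sub_nonneg.2 (hf.2 hq hr ha.le hb.le hab)
  have hsplit : a • (f q + δ) + b • (f r + δ) = f (a • q + b • r) := by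
    rw [smul_add, smul_add, add_add_add_comm, ← add_smul, hab, one_smul, add_sub_cancel]
  obtain ⟨hq', hr'⟩ := (mem_extremePoints.1 hfp).2 _
    (hW (le_add_of_nonneg_right hδ) (hmaps hq)) _
    (hW (le_add_of_nonneg_right hδ) (hmaps hr)) ⟨a, b, ha, hb, hab, hsplit⟩
  have hqr : q = r := hinj hq hr (add_right_cancel (hq'.trans hr'.symm))
  subst hqr
  rw [Convex.combo_self hab]
  exact ⟨rfl, rfl⟩

end Ordered

theorem convex_setOf_apply_nonneg {ι : Type*} (i : ι) : Convex ℝ {u : ι → ℝ | 0 ≤ u i} :=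
  convex_halfSpace_ge (LinearMap.proj (R := ℝ) (φ := fun _ : ι => ℝ) i).isLinear 0

theorem isUpperSet_setOf_apply_nonneg {ι : Type*} (i : ι) : IsUpperSet {u : ι → ℝ | 0 ≤ u i} :=
  fun _ _ huv hu => hu.trans (huv i)

noncomputable def sqrtSnd (u : Fin 2 → ℝ) : Fin 2 → ℝ := ![u 0, √(u 1)]

theorem monotone_sqrtSnd : Monotone sqrtSnd := by
  intro u v huv i
  fin_cases i
  · exact huv 0
  · exact Real.sqrt_le_sqrt (huv 1)

theorem injOn_sqrtSnd : InjOn sqrtSnd {u | 0 ≤ u 1} := by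
  intro u hu v hv huv
  have h0 : u 0 = v 0 := congrFun huv 0
  have h1 : √(u 1) = √(v 1) := congrFun huv 1
  ext i
  fin_cases i
  · exact h0
  · exact (Real.sqrt_inj hu hv).1 h1

theorem concaveOn_sqrtSnd : ConcaveOn ℝ {u | 0 ≤ u 1} sqrtSnd := by
  refine ⟨convex_setOf_apply_nonneg 1, fun u hu v hv a b ha hb hab i => ?_⟩
  fin_cases i
  · simp [sqrtSnd]
  · simpa [sqrtSnd] using Real.strictConcaveOn_sqrt.concaveOn.2 hu hv ha hb hab

-- The points `u` with `u 1 ≥ 0` and `sqrtSnd u` in the target form a convex upper set containing `S`.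
theorem mapsTo_sqrtSnd_convexHull_add_Ici_zero {S : Set (Fin 2 → ℝ)} (hS : S ⊆ {u | 0 ≤ u 1}) :
    MapsTo sqrtSnd (convexHull ℝ S + Ici 0) (convexHull ℝ (sqrtSnd '' S) + Ici 0) := by
  have hpre := convexHull_add_Ici_zero_subset
    (concaveOn_sqrtSnd.convex_inter_preimage (convex_convexHull_add_Ici_zero _)
      (isUpperSet_convexHull_add_Ici_zero _))
    ((isUpperSet_setOf_apply_nonneg 1).inter
      ((isUpperSet_convexHull_add_Ici_zero _).preimage monotone_sqrtSnd))
    (fun s hs => ⟨hS hs, subset_convexHull_add_Ici_zero _ (mem_image_of_mem _ hs)⟩)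
  exact fun u hu => (hpre hu).2

theorem sqrt_extreme_implies_linear_extreme_general
    {n : ℕ} (X : Finset (Fin n → ℝ))
    (hX01 : ∀ x ∈ X, ∀ i, x i = 0 ∨ x i = 1)
    (c d : Fin n → ℝ) (hd : ∀ i, 0 ≤ d i)
    (x' : Fin n → ℝ) (hx' : x' ∈ X)
    (hext : ![∑ i, c i * x' i, Real.sqrt (∑ i, d i * x' i)] ∈
      (convexHull ℝ
          ((fun x => ![∑ i, c i * x i, Real.sqrt (∑ i, d i * x i)]) '' (X : Set (Fin n → ℝ))) +
        {v : Fin 2 → ℝ | 0 ≤ v}).extremePoints ℝ) :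
    ![∑ i, c i * x' i, ∑ i, d i * x' i] ∈
      (convexHull ℝ
          ((fun x => ![∑ i, c i * x i, ∑ i, d i * x i]) '' (X : Set (Fin n → ℝ))) +
        {v : Fin 2 → ℝ | 0 ≤ v}).extremePoints ℝ := by
  set S := (fun x => ![∑ i, c i * x i, ∑ i, d i * x i]) '' (X : Set (Fin n → ℝ))
  have hS : (fun x => ![∑ i, c i * x i, √(∑ i, d i * x i)]) '' (X : Set (Fin n → ℝ)) =
      sqrtSnd '' S := by
    rw [image_image]; rfl
  have hSH : S ⊆ {u | 0 ≤ u 1} := by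
    rintro _ ⟨x, hx, rfl⟩
    change 0 ≤ ∑ i, d i * x i
    refine Finset.sum_nonneg fun i _ => mul_nonneg (hd i) ?_
    rcases hX01 x hx i with h | h <;> simp [h]
  have hV₂H : convexHull ℝ S + Ici 0 ⊆ {u | 0 ≤ u 1} :=
    convexHull_add_Ici_zero_subset (convex_setOf_apply_nonneg 1)
      (isUpperSet_setOf_apply_nonneg 1) hSH
  rw [hS] at hext
  exact mem_extremePoints_of_concaveOn_of_injOn
    (concaveOn_sqrtSnd.subset hV₂H (convex_convexHull_add_Ici_zero S))
    (injOn_sqrtSnd.mono hV₂H) (mapsTo_sqrtSnd_convexHull_add_Ici_zero hSH)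
    (isUpperSet_convexHull_add_Ici_zero _) (subset_convexHull_add_Ici_zero S ⟨x', hx', rfl⟩) hext

/-- every efficient extreme solution of `min_{x∈X} (cᵀx, √(dᵀx))` is an
efficient extreme solution of `min_{x∈X} (cᵀx, dᵀx)`: if `(cᵀx', √(dᵀx'))` is an extreme
point of `V₁ = conv({(cᵀx, √(dᵀx)) : x ∈ X}) + ℝ²₊`, then `(cᵀx', dᵀx')` is an extreme
point of `V₂ = conv({(cᵀx, dᵀx) : x ∈ X}) + ℝ²₊`. -/
theorem sqrt_extreme_implies_linear_extreme
    {n : ℕ} (X : Finset (Fin n → ℝ)) (hXne : X.Nonempty)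
    (hX01 : ∀ x ∈ X, ∀ i, x i = 0 ∨ x i = 1)
    (c d : Fin n → ℝ) (hd : ∀ i, 0 ≤ d i)
    (x' : Fin n → ℝ) (hx' : x' ∈ X)
    (hext : ![∑ i, c i * x' i, Real.sqrt (∑ i, d i * x' i)] ∈
      (convexHull ℝ
          ((fun x => ![∑ i, c i * x i, Real.sqrt (∑ i, d i * x i)]) '' (X : Set (Fin n → ℝ))) +
        {v : Fin 2 → ℝ | 0 ≤ v}).extremePoints ℝ) :
    ![∑ i, c i * x' i, ∑ i, d i * x' i] ∈
      (convexHull ℝ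
          ((fun x => ![∑ i, c i * x i, ∑ i, d i * x i]) '' (X : Set (Fin n → ℝ))) +
        {v : Fin 2 → ℝ | 0 ≤ v}).extremePoints ℝ :=
  sqrt_extreme_implies_linear_extreme_general X hX01 c d hd x' hx' hext
end

section
/- Let X ⊆ {0,1}ⁿ be finite and nonempty, let c ∈ ℝⁿ, and let Q be a positive definite real n×n matrix. Let V₁ = conv({(cᵀx, √(xᵀQx)) : x ∈ X}) + ℝ²₊ and V₂ = conv({(cᵀx, xᵀQx) : x ∈ X}) + ℝ²₊. If x' ∈ X is such that (cᵀx', √(x'ᵀQx')) is an extreme point of V₁, then (cᵀx', x'ᵀQx') is an extreme point of V₂; that is, every efficient extreme solution of min_{x∈X}(cᵀx, √(xᵀQx)) is an efficient extreme solution of min_{x∈X}(cᵀx, xᵀQx). -/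
/-!
Write `ψ = mapSecond √`, i.e. `ψ(a, b) = (a, √b)`, so that the first image set is `ψ` of the
second. Because `√` is concave and monotone, `ψ` maps `conv(S) + ℝ²₊` into `conv(ψ S) + ℝ²₊`.
If `p` lies in an open segment `]y, z[` of `conv(S) + ℝ²₊`, the corresponding combination `m`
of `ψ y` and `ψ z` lies below `ψ p`; extremality of `ψ p` in an upward-closed set forces
`m = ψ p`, strict concavity of `√` then forces `y₂ = z₂`, and extremality once more gives
`ψ y = ψ p`.
-/

open Pointwise Matrix Set

section UpwardClosed

variable {E : Type*} [AddCommGroup E] [PartialOrder E] [IsOrderedAddMonoid E] {C : Set E}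

lemma mem_add_nonneg_of_le {u w : E} (hu : u ∈ C + {v | 0 ≤ v}) (huw : u ≤ w) :
    w ∈ C + {v | 0 ≤ v} := by
  obtain ⟨a, ha, p, hp, rfl⟩ := hu
  exact ⟨a, ha, w - a, sub_nonneg.2 ((le_add_of_nonneg_right hp).trans huw), add_sub_cancel a w⟩

lemma eq_of_le_of_mem_extremePoints_add_nonneg [Module ℝ E] {x m : E}
    (hx : x ∈ (C + {v | 0 ≤ v}).extremePoints ℝ) (hm : m ∈ C + {v | 0 ≤ v}) (hmx : m ≤ x) :
    m = x := by
  have hx' : x + (x - m) ∈ C + {v | 0 ≤ v} :=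
    mem_add_nonneg_of_le hx.1 (le_add_of_nonneg_right (sub_nonneg.2 hmx))
  have hseg : x ∈ openSegment ℝ m (x + (x - m)) :=
    ⟨1 / 2, 1 / 2, by norm_num, by norm_num, by norm_num, by module⟩
  exact hx.2 hm hx' hseg

end UpwardClosed

def mapSecond (h : ℝ → ℝ) (v : Fin 2 → ℝ) : Fin 2 → ℝ := ![v 0, h (v 1)]

section MapSecond

variable {h : ℝ → ℝ} {S : Set (Fin 2 → ℝ)}

lemma mapSecond_le_mapSecond (hmono : MonotoneOn h (Ici 0)) {v w : Fin 2 → ℝ} (hv : 0 ≤ v 1)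
    (hvw : v ≤ w) :
    mapSecond h v ≤ mapSecond h w := by
  intro i
  fin_cases i
  · exact hvw 0
  · exact hmono hv (hv.trans (hvw 1)) (hvw 1)

lemma smul_mapSecond_add_smul_mapSecond_le (hconc : ConcaveOn ℝ (Ici 0) h) {v w : Fin 2 → ℝ}
    (hv : 0 ≤ v 1) (hw : 0 ≤ w 1) {s t : ℝ} (hs : 0 ≤ s) (ht : 0 ≤ t) (hst : s + t = 1) :
    s • mapSecond h v + t • mapSecond h w ≤ mapSecond h (s • v + t • w) := by
  intro i
  fin_cases i
  · simp [mapSecond]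
  · simpa [mapSecond] using hconc.2 hv hw hs ht hst

lemma mapSecond_mem_of_mem_convexHull (hconc : ConcaveOn ℝ (Ici 0) h) (hS : ∀ v ∈ S, 0 ≤ v 1)
    {a : Fin 2 → ℝ} (ha : a ∈ convexHull ℝ S) :
    0 ≤ a 1 ∧ mapSecond h a ∈ convexHull ℝ (mapSecond h '' S) + {v | 0 ≤ v} := by
  have hV : Convex ℝ (convexHull ℝ (mapSecond h '' S) + {v : Fin 2 → ℝ | 0 ≤ v}) :=
    (convex_convexHull ℝ _).add (convex_Ici 0)
  refine convexHull_min (t := {a | 0 ≤ a 1 ∧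
    mapSecond h a ∈ convexHull ℝ (mapSecond h '' S) + {v | 0 ≤ v}}) ?_ ?_ ha
  · intro v hv
    exact ⟨hS v hv, subset_add_left _ (le_refl 0)
      (subset_convexHull ℝ _ (mem_image_of_mem _ hv))⟩
  · rintro v ⟨hv1, hv⟩ w ⟨hw1, hw⟩ s t hs ht hst
    refine ⟨by simpa using add_nonneg (mul_nonneg hs hv1) (mul_nonneg ht hw1), ?_⟩
    exact mem_add_nonneg_of_le (hV hv hw hs ht hst)
      (smul_mapSecond_add_smul_mapSecond_le hconc hv1 hw1 hs ht hst)

lemma mapSecond_mem_of_mem_convexHull_add_nonneg (hconc : ConcaveOn ℝ (Ici 0) h)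
    (hmono : MonotoneOn h (Ici 0)) (hS : ∀ v ∈ S, 0 ≤ v 1) {w : Fin 2 → ℝ}
    (hw : w ∈ convexHull ℝ S + {v | 0 ≤ v}) :
    0 ≤ w 1 ∧ mapSecond h w ∈ convexHull ℝ (mapSecond h '' S) + {v | 0 ≤ v} := by
  obtain ⟨a, ha, p, hp, rfl⟩ := hw
  obtain ⟨ha1, hψa⟩ := mapSecond_mem_of_mem_convexHull hconc hS ha
  have hle : a ≤ a + p := le_add_of_nonneg_right hp
  exact ⟨ha1.trans (hle 1), mem_add_nonneg_of_le hψa (mapSecond_le_mapSecond hmono ha1 hle)⟩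

theorem mem_extremePoints_of_mapSecond_mem_extremePoints (hconc : StrictConcaveOn ℝ (Ici 0) h)
    (hmono : MonotoneOn h (Ici 0)) (hS : ∀ v ∈ S, 0 ≤ v 1) {p : Fin 2 → ℝ} (hp : p ∈ S)
    (hext : mapSecond h p ∈ (convexHull ℝ (mapSecond h '' S) + {v | 0 ≤ v}).extremePoints ℝ) :
    p ∈ (convexHull ℝ S + {v | 0 ≤ v}).extremePoints ℝ := by
  refine ⟨subset_add_left _ (le_refl 0) (subset_convexHull ℝ S hp), ?_⟩
  rintro y hy z hz ⟨s, t, hs, ht, hst, rfl⟩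
  obtain ⟨hy1, hψy⟩ := mapSecond_mem_of_mem_convexHull_add_nonneg hconc.concaveOn hmono hS hy
  obtain ⟨hz1, hψz⟩ := mapSecond_mem_of_mem_convexHull_add_nonneg hconc.concaveOn hmono hS hz
  have hcombo : s • mapSecond h y + t • mapSecond h z = mapSecond h (s • y + t • z) :=
    eq_of_le_of_mem_extremePoints_add_nonneg hext
      ((convex_convexHull ℝ _).add (convex_Ici 0) hψy hψz hs.le ht.le hst)
      (smul_mapSecond_add_smul_mapSecond_le hconc.concaveOn hy1 hz1 hs.le ht.le hst)
  have hyz : y 1 = z 1 := by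
    by_contra hne
    have hlt := hconc.2 hy1 hz1 hne hs ht hst
    have heq : s * h (y 1) + t * h (z 1) = h (s * y 1 + t * z 1) := by
      simpa [mapSecond] using congrFun hcombo 1
    exact hlt.ne heq
  have hψ := hext.2 hψy hψz ⟨s, t, hs, ht, hst, hcombo⟩
  ext i
  fin_cases i
  · simpa [mapSecond] using congrFun hψ 0
  · show y 1 = s * y 1 + t * z 1
    linear_combination t * hyz - y 1 * hst

end MapSecond

theorem ellipsoidal_sqrt_extreme_implies_quadratic_extreme_general
    {n : ℕ} (X : Finset (Fin n → ℝ))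
    (c : Fin n → ℝ) (Q : Matrix (Fin n) (Fin n) ℝ) (hQ : Q.PosDef)
    (x' : Fin n → ℝ) (hx' : x' ∈ X)
    (hext : ![∑ i, c i * x' i, Real.sqrt (x' ⬝ᵥ Q *ᵥ x')] ∈
      (convexHull ℝ
          ((fun x => ![∑ i, c i * x i, Real.sqrt (x ⬝ᵥ Q *ᵥ x)]) '' (X : Set (Fin n → ℝ))) +
        {v : Fin 2 → ℝ | 0 ≤ v}).extremePoints ℝ) :
    ![∑ i, c i * x' i, x' ⬝ᵥ Q *ᵥ x'] ∈
      (convexHull ℝ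
          ((fun x => ![∑ i, c i * x i, x ⬝ᵥ Q *ᵥ x]) '' (X : Set (Fin n → ℝ))) +
        {v : Fin 2 → ℝ | 0 ≤ v}).extremePoints ℝ := by
  have hS : ∀ v ∈ (fun x => ![∑ i, c i * x i, x ⬝ᵥ Q *ᵥ x]) '' (X : Set (Fin n → ℝ)),
      0 ≤ v 1 := by
    rintro _ ⟨x, -, rfl⟩
    simpa using hQ.posSemidef.dotProduct_mulVec_nonneg x
  refine mem_extremePoints_of_mapSecond_mem_extremePoints Real.strictConcaveOn_sqrt
    (Real.sqrt_monotone.monotoneOn _) hS (mem_image_of_mem _ hx') ?_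
  rwa [image_image]

/-- every efficient extreme solution of `min_{x∈X} (cᵀx, √(xᵀQx))` is an
efficient extreme solution of `min_{x∈X} (cᵀx, xᵀQx)`, where `Q` is positive definite. -/
theorem ellipsoidal_sqrt_extreme_implies_quadratic_extreme
    {n : ℕ} (X : Finset (Fin n → ℝ)) (hXne : X.Nonempty)
    (hX01 : ∀ x ∈ X, ∀ i, x i = 0 ∨ x i = 1)
    (c : Fin n → ℝ) (Q : Matrix (Fin n) (Fin n) ℝ) (hQ : Q.PosDef)
    (x' : Fin n → ℝ) (hx' : x' ∈ X)
    (hext : ![∑ i, c i * x' i, Real.sqrt (x' ⬝ᵥ Q *ᵥ x')] ∈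
      (convexHull ℝ
          ((fun x => ![∑ i, c i * x i, Real.sqrt (x ⬝ᵥ Q *ᵥ x)]) '' (X : Set (Fin n → ℝ))) +
        {v : Fin 2 → ℝ | 0 ≤ v}).extremePoints ℝ) :
    ![∑ i, c i * x' i, x' ⬝ᵥ Q *ᵥ x'] ∈
      (convexHull ℝ
          ((fun x => ![∑ i, c i * x i, x ⬝ᵥ Q *ᵥ x]) '' (X : Set (Fin n → ℝ))) +
        {v : Fin 2 → ℝ | 0 ≤ v}).extremePoints ℝ :=
  ellipsoidal_sqrt_extreme_implies_quadratic_extreme_general X c Q hQ x' hx' hext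
end

section
/- Let X ⊆ {0,1}ⁿ be finite and nonempty, let ĉ ∈ ℝⁿ with ĉ ≥ 0 componentwise, and let x ∈ {0,1}ⁿ. Define reg(x,λ) = max_{c∈U(λ)} ( cᵀx − min_{y∈X} cᵀy ) with U(λ) = {c : (1−λ)ĉᵢ ≤ cᵢ ≤ (1+λ)ĉᵢ for all i}. Then the function λ ↦ reg(x,λ) is monotonically nondecreasing and convex on [0,1]. -/
/-!
Against a fixed competitor `y`, the worst scenario in `U(λ)` raises `cᵢ` to `(1+λ)ĉᵢ` where
`xᵢ > yᵢ` and lowers it to `(1-λ)ĉᵢ` where `xᵢ < yᵢ`, so that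
`reg(x,λ) = max_{y∈X} (ĉᵀ(x-y) + λ ∑ ĉᵢ|xᵢ-yᵢ|)`. This is a finite maximum of affine functions
of `λ` with nonnegative slopes, hence nondecreasing and convex.
-/

open Finset Set

theorem MonotoneOn.finset_sup' {ι E β : Type*} [Preorder E] [LinearOrder β] {s : Finset ι}
    {D : Set E} {f : ι → E → β} (hs : s.Nonempty) (hf : ∀ i ∈ s, MonotoneOn (f i) D) :
    MonotoneOn (fun a => s.sup' hs fun i => f i a) D :=
  fun _ ha _ hb hab => sup'_mono_fun fun i hi => hf i hi ha hb hab

theorem ConvexOn.finset_sup' {ι 𝕜 E β : Type*} [Semiring 𝕜] [PartialOrder 𝕜] [AddCommMonoid E]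
    [AddCommMonoid β] [LinearOrder β] [IsOrderedAddMonoid β] [SMul 𝕜 E] [Module 𝕜 β]
    [PosSMulMono 𝕜 β] {s : Finset ι} {D : Set E} {f : ι → E → β}
    (hs : s.Nonempty) (hD : Convex 𝕜 D) (hf : ∀ i ∈ s, ConvexOn 𝕜 D (f i)) :
    ConvexOn 𝕜 D (fun a => s.sup' hs fun i => f i a) := by
  refine ⟨hD, fun a ha b hb p q hp hq hpq => sup'_le _ _ fun i hi => ?_⟩
  calc f i (p • a + q • b) ≤ p • f i a + q • f i b := (hf i hi).2 ha hb hp hq hpq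
    _ ≤ p • s.sup' hs (fun j => f j a) + q • s.sup' hs (fun j => f j b) := by
      gcongr <;> exact le_sup' (fun j => f j _) hi

theorem mul_le_mul_add_mul_abs_of_mem_Icc {lam b c d : ℝ}
    (hc : c ∈ Icc ((1 - lam) * b) ((1 + lam) * b)) : c * d ≤ b * d + lam * (b * |d|) := by
  obtain ⟨hlo, hhi⟩ := hc
  rcases le_or_gt 0 d with hd | hd
  · rw [abs_of_nonneg hd]; nlinarith
  · rw [abs_of_neg hd]; nlinarith

variable {ι : Type*}

def intervalBox (chat : ι → ℝ) (lam : ℝ) : Set (ι → ℝ) :=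
  {c | ∀ i, (1 - lam) * chat i ≤ c i ∧ c i ≤ (1 + lam) * chat i}

noncomputable def worstScenario (chat x y : ι → ℝ) (lam : ℝ) : ι → ℝ :=
  fun i => if 0 ≤ x i - y i then (1 + lam) * chat i else (1 - lam) * chat i

theorem worstScenario_mem_intervalBox {chat : ι → ℝ} {lam : ℝ} (hchat : ∀ i, 0 ≤ chat i)
    (hlam : 0 ≤ lam) (x y : ι → ℝ) : worstScenario chat x y lam ∈ intervalBox chat lam := by
  intro i
  have := mul_nonneg hlam (hchat i)
  unfold worstScenario
  split_ifs <;> constructor <;> linarith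

variable [Fintype ι]

def regret (X : Finset (ι → ℝ)) (hX : X.Nonempty) (x c : ι → ℝ) : ℝ :=
  (∑ i, c i * x i) - X.inf' hX (fun y => ∑ i, c i * y i)

def pairRegret (chat x y : ι → ℝ) (lam : ℝ) : ℝ :=
  (∑ i, chat i * (x i - y i)) + lam * ∑ i, chat i * |x i - y i|

theorem sum_mul_sub_le_pairRegret {chat c : ι → ℝ} {lam : ℝ}
    (hc : c ∈ intervalBox chat lam) (x y : ι → ℝ) :
    ∑ i, c i * (x i - y i) ≤ pairRegret chat x y lam := by
  rw [pairRegret, mul_sum, ← sum_add_distrib]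
  exact sum_le_sum fun i _ => mul_le_mul_add_mul_abs_of_mem_Icc (hc i)

theorem sum_worstScenario_mul_sub (chat x y : ι → ℝ) (lam : ℝ) :
    ∑ i, worstScenario chat x y lam i * (x i - y i) = pairRegret chat x y lam := by
  rw [pairRegret, mul_sum, ← sum_add_distrib]
  refine sum_congr rfl fun i _ => ?_
  unfold worstScenario
  split_ifs with hd
  · rw [abs_of_nonneg hd]; ring
  · rw [abs_of_neg (not_le.mp hd)]; ring

theorem sum_mul_sub_sum_mul (c x y : ι → ℝ) :
    (∑ i, c i * x i) - ∑ i, c i * y i = ∑ i, c i * (x i - y i) := by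
  rw [← sum_sub_distrib]
  simp only [mul_sub]

section Regret

variable {X : Finset (ι → ℝ)} (hX : X.Nonempty) {chat : ι → ℝ} (x : ι → ℝ)

theorem regret_le_sup'_pairRegret {lam : ℝ} {c : ι → ℝ}
    (hc : c ∈ intervalBox chat lam) :
    regret X hX x c ≤ X.sup' hX fun y => pairRegret chat x y lam := by
  obtain ⟨y, hy, hy_min⟩ := X.exists_mem_eq_inf' hX fun y => ∑ i, c i * y i
  rw [regret, hy_min, sum_mul_sub_sum_mul]
  exact (sum_mul_sub_le_pairRegret hc x y).trans (le_sup' (pairRegret chat x · lam) hy)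

theorem pairRegret_le_regret_worstScenario {y : ι → ℝ} (hy : y ∈ X) (lam : ℝ) :
    pairRegret chat x y lam ≤ regret X hX x (worstScenario chat x y lam) := by
  rw [regret, ← sum_worstScenario_mul_sub, ← sum_mul_sub_sum_mul]
  gcongr
  exact inf'_le _ hy

theorem sSup_regret_image_intervalBox (hchat : ∀ i, 0 ≤ chat i) {lam : ℝ} (hlam : 0 ≤ lam) :
    sSup (regret X hX x '' intervalBox chat lam) = X.sup' hX fun y => pairRegret chat x y lam := by
  obtain ⟨y, hy, hy_max⟩ := X.exists_mem_eq_sup' hX fun y => pairRegret chat x y lam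
  refine IsGreatest.csSup_eq ⟨?_, ?_⟩
  · rw [hy_max]
    refine ⟨_, worstScenario_mem_intervalBox hchat hlam x y, le_antisymm ?_ ?_⟩
    · exact hy_max ▸ regret_le_sup'_pairRegret hX x
        (worstScenario_mem_intervalBox hchat hlam x y)
    · exact pairRegret_le_regret_worstScenario hX x hy lam
  · rintro _ ⟨c, hc, rfl⟩
    exact regret_le_sup'_pairRegret hX x hc

end Regret

theorem monotone_pairRegret {chat : ι → ℝ} (hchat : ∀ i, 0 ≤ chat i) (x y : ι → ℝ) :
    Monotone (pairRegret chat x y) := fun _ _ hab => by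
  unfold pairRegret
  gcongr
  exact sum_nonneg fun i _ => mul_nonneg (hchat i) (abs_nonneg _)

theorem convexOn_pairRegret (chat x y : ι → ℝ) : ConvexOn ℝ univ (pairRegret chat x y) := by
  refine ⟨convex_univ, fun a _ b _ p q _ _ hpq => le_of_eq ?_⟩
  simp only [pairRegret, smul_eq_mul]
  linear_combination (-∑ i, chat i * (x i - y i)) * hpq

theorem regret_monotone_and_convex_general
    {n : ℕ} (X : Finset (Fin n → ℝ)) (hX : X.Nonempty)
    (chat : Fin n → ℝ) (hchat : ∀ i, 0 ≤ chat i)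
    (x : Fin n → ℝ) :
    MonotoneOn
      (fun lam : ℝ => sSup
        ((fun c : Fin n → ℝ =>
            (∑ i, c i * x i) - X.inf' hX (fun y => ∑ i, c i * y i)) ''
          {c : Fin n → ℝ | ∀ i, (1 - lam) * chat i ≤ c i ∧ c i ≤ (1 + lam) * chat i}))
      (Set.Icc (0 : ℝ) 1) ∧
    ConvexOn ℝ (Set.Icc (0 : ℝ) 1)
      (fun lam : ℝ => sSup
        ((fun c : Fin n → ℝ =>
            (∑ i, c i * x i) - X.inf' hX (fun y => ∑ i, c i * y i)) ''
          {c : Fin n → ℝ | ∀ i, (1 - lam) * chat i ≤ c i ∧ c i ≤ (1 + lam) * chat i})) := by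
  have hreg : EqOn (fun lam => X.sup' hX fun y => pairRegret chat x y lam)
      (fun lam => sSup (regret X hX x '' intervalBox chat lam)) (Icc 0 1) :=
    fun lam hlam => (sSup_regret_image_intervalBox hX x hchat hlam.1).symm
  exact ⟨(MonotoneOn.finset_sup' hX fun y _ =>
      (monotone_pairRegret hchat x y).monotoneOn _).congr hreg,
    (ConvexOn.finset_sup' hX (convex_Icc 0 1) fun y _ =>
      (convexOn_pairRegret chat x y).subset (subset_univ _) (convex_Icc 0 1)).congr hreg⟩

/-- for the regular interval uncertainty set
`U(λ) = {c : (1-λ)ĉᵢ ≤ cᵢ ≤ (1+λ)ĉᵢ}` with `ĉ ≥ 0` and binary `x`, the regret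
`λ ↦ reg(x,λ) = max_{c∈U(λ)} (cᵀx − min_{y∈X} cᵀy)` is monotonically nondecreasing
and convex on `[0,1]`. -/
theorem regret_monotone_and_convex
    {n : ℕ} (X : Finset (Fin n → ℝ)) (hX : X.Nonempty)
    (hX01 : ∀ y ∈ X, ∀ i, y i = 0 ∨ y i = 1)
    (chat : Fin n → ℝ) (hchat : ∀ i, 0 ≤ chat i)
    (x : Fin n → ℝ) (hx : ∀ i, x i = 0 ∨ x i = 1) :
    MonotoneOn
      (fun lam : ℝ => sSup
        ((fun c : Fin n → ℝ =>
            (∑ i, c i * x i) - X.inf' hX (fun y => ∑ i, c i * y i)) ''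
          {c : Fin n → ℝ | ∀ i, (1 - lam) * chat i ≤ c i ∧ c i ≤ (1 + lam) * chat i}))
      (Set.Icc (0 : ℝ) 1) ∧
    ConvexOn ℝ (Set.Icc (0 : ℝ) 1)
      (fun lam : ℝ => sSup
        ((fun c : Fin n → ℝ =>
            (∑ i, c i * x i) - X.inf' hX (fun y => ∑ i, c i * y i)) ''
          {c : Fin n → ℝ | ∀ i, (1 - lam) * chat i ≤ c i ∧ c i ≤ (1 + lam) * chat i})) :=
  regret_monotone_and_convex_general X hX chat hchat x
end

section
/- Consider the unconstrained combinatorial problem with X = {0,1}ⁿ, nominal costs ĉ ∈ ℝⁿ, and deviations d⁺, d⁻ ∈ ℝⁿ with d⁺ ≥ 0 and d⁻ ≥ 0, giving the interval uncertainty set U(d⁺,d⁻) = {c : ĉᵢ − dᵢ⁻ ≤ cᵢ ≤ ĉᵢ + dᵢ⁺ for all i}. Define x* ∈ {0,1}ⁿ by x*ᵢ = 1 if 2ĉᵢ + dᵢ⁺ − dᵢ⁻ ≤ 0 and x*ᵢ = 0 otherwise. Then x* minimizes the regret reg(x) = max_{c∈U(d⁺,d⁻)} ( cᵀx − min_{y∈{0,1}ⁿ}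 cᵀy ) over all x ∈ {0,1}ⁿ. -/
/-
Over `{0,1}ⁿ` everything splits coordinatewise. For fixed costs `c` the best solution takes
exactly the negative coordinates, so `min_y cᵀy = ∑ min(cᵢ, 0)` and the regret of `x` against
`c` is `∑ (cᵢxᵢ − min(cᵢ, 0))`. The `i`-th term is `max(cᵢ, 0)` if `xᵢ = 1`, increasing in `cᵢ`,
and `max(−cᵢ, 0)` if `xᵢ = 0`, decreasing in `cᵢ`; so the adversary sets `cᵢ` to the upper end
`ĉᵢ + dᵢ⁺` or the lower end `ĉᵢ − dᵢ⁻` of its interval. Each coordinate of `x` is then chosen to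
minimise its own term, and `max(ĉᵢ + dᵢ⁺, 0) ≤ max(dᵢ⁻ − ĉᵢ, 0)` holds exactly when
`2ĉᵢ + dᵢ⁺ − dᵢ⁻ ≤ 0`.
-/

/-- The binary cube `{0,1}ⁿ`, feasible set of the unconstrained combinatorial problem. -/
def binaryCube (n : ℕ) : Set (Fin n → ℝ) := {y | ∀ i, y i = 0 ∨ y i = 1}

/-- The min-max regret of `x` for the unconstrained combinatorial problem with general
interval uncertainty set `U(d⁺,d⁻) = {c : ĉᵢ − dᵢ⁻ ≤ cᵢ ≤ ĉᵢ + dᵢ⁺}`: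
`reg(x) = max_{c∈U(d⁺,d⁻)} ( cᵀx − min_{y∈{0,1}ⁿ} cᵀy )`. -/
noncomputable def ucRegret {n : ℕ} (chat dp dm : Fin n → ℝ) (x : Fin n → ℝ) : ℝ :=
  sSup ((fun c : Fin n → ℝ =>
      (∑ i, c i * x i) - sInf ((fun y => ∑ i, c i * y i) '' binaryCube n)) ''
    {c : Fin n → ℝ | ∀ i, chat i - dm i ≤ c i ∧ c i ≤ chat i + dp i})

/-- `max_{c ∈ [lo, hi]} (c b − min(c, 0))` for `b ∈ {0,1}`: the worst-case regret contributed by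
one coordinate. -/
noncomputable def intervalRegret (lo hi b : ℝ) : ℝ := if b = 1 then max hi 0 else max (-lo) 0

lemma mul_sub_min_le_intervalRegret {lo hi b c : ℝ} (hb : b = 0 ∨ b = 1) (hlo : lo ≤ c)
    (hhi : c ≤ hi) : c * b - min c 0 ≤ intervalRegret lo hi b := by
  rcases hb with rfl | rfl <;> simp only [intervalRegret, min_def, max_def] <;> split_ifs <;>
    linarith

lemma mul_sub_min_eq_intervalRegret {lo hi b : ℝ} (hb : b = 0 ∨ b = 1) :
    (if b = 1 then hi else lo) * b - min (if b = 1 then hi else lo) 0 =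
      intervalRegret lo hi b := by
  rcases hb with rfl | rfl <;> simp only [intervalRegret, min_def, max_def] <;> split_ifs <;>
    linarith

lemma intervalRegret_le {lo hi b : ℝ} (hb : b = 0 ∨ b = 1) :
    intervalRegret lo hi (if lo + hi ≤ 0 then 1 else 0) ≤ intervalRegret lo hi b := by
  unfold intervalRegret
  rcases hb with rfl | rfl <;> split_ifs <;> first
    | exact le_rfl
    | exact max_le_max (by linarith) le_rfl

lemma sInf_image_sum_mul_binaryCube {n : ℕ} (c : Fin n → ℝ) :
    sInf ((fun y => ∑ i, c i * y i) '' binaryCube n) = ∑ i, min (c i) 0 := by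
  refine IsLeast.csInf_eq ⟨⟨fun i => if c i ≤ 0 then 1 else 0, fun i => ?_, ?_⟩, ?_⟩
  · dsimp only
    split_ifs <;> simp
  · refine Finset.sum_congr rfl fun i _ => ?_
    dsimp only
    split_ifs with h
    · simp [h]
    · simp [(not_le.mp h).le]
  · rintro _ ⟨y, hy, rfl⟩
    refine Finset.sum_le_sum fun i _ => ?_
    rcases hy i with h | h <;> simp [h]

lemma ucRegret_eq_sum_intervalRegret {n : ℕ} {chat dp dm x : Fin n → ℝ}
    (hU : ∀ i, chat i - dm i ≤ chat i + dp i) (hx : x ∈ binaryCube n) :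
    ucRegret chat dp dm x = ∑ i, intervalRegret (chat i - dm i) (chat i + dp i) (x i) := by
  unfold ucRegret
  refine IsGreatest.csSup_eq ⟨⟨fun i => if x i = 1 then chat i + dp i else chat i - dm i,
    fun i => ?_, ?_⟩, ?_⟩
  · dsimp only
    split_ifs
    · exact ⟨hU i, le_rfl⟩
    · exact ⟨le_rfl, hU i⟩
  · simp only [sInf_image_sum_mul_binaryCube, ← Finset.sum_sub_distrib]
    exact Finset.sum_congr rfl fun i _ => mul_sub_min_eq_intervalRegret (hx i)
  · rintro _ ⟨c, hc, rfl⟩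
    simp only [sInf_image_sum_mul_binaryCube, ← Finset.sum_sub_distrib]
    exact Finset.sum_le_sum fun i _ => mul_sub_min_le_intervalRegret (hx i) (hc i).1 (hc i).2

/-- Lemma on the unconstrained problem: the solution `x*` with `x*ᵢ = 1` iff
`2ĉᵢ + dᵢ⁺ − dᵢ⁻ ≤ 0` minimizes the min-max regret over `{0,1}ⁿ`. -/
theorem unconstrained_regret_optimal_solution
    {n : ℕ} (chat dp dm : Fin n → ℝ) (hdp : ∀ i, 0 ≤ dp i) (hdm : ∀ i, 0 ≤ dm i) :
    (fun i => if 2 * chat i + dp i - dm i ≤ 0 then (1 : ℝ) else 0) ∈ binaryCube n ∧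
    ∀ x ∈ binaryCube n,
      ucRegret chat dp dm (fun i => if 2 * chat i + dp i - dm i ≤ 0 then (1 : ℝ) else 0) ≤
        ucRegret chat dp dm x := by
  have hU : ∀ i, chat i - dm i ≤ chat i + dp i := fun i => by linarith [hdp i, hdm i]
  have hsum : ∀ i, 2 * chat i + dp i - dm i = (chat i - dm i) + (chat i + dp i) :=
    fun i => by ring
  have hstar : (fun i => if 2 * chat i + dp i - dm i ≤ 0 then (1 : ℝ) else 0) ∈ binaryCube n :=
    fun i => by dsimp only; split_ifs <;> simp
  refine ⟨hstar, fun x hx => ?_⟩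
  rw [ucRegret_eq_sum_intervalRegret hU hstar, ucRegret_eq_sum_intervalRegret hU hx]
  simp only [hsum]
  exact Finset.sum_le_sum fun i _ => intervalRegret_le (hx i)
end
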